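/- arXiv:2104.02928 — 4 statements merged into one kernel-verified Lean document; each statement's English description precedes it below -/
import Mathlib

section
/- Let n ≥ 3 and Ω = ZMod n. A partition 𝓐 of Ω³ is a circulant association scheme on triples (circulant AST) on Ω if and only if 𝓐 = 𝓐(𝓘) for some AST-regular partition 𝓘 of X, where 𝓐(𝓘) = {R₀, R₁, R₂, R₃} ∪ {R_I : I ∈ 𝓘}. -/
open Set

namespace CirculantAST

/-- The trivial relation `R₀ = {(x,x,x) : x ∈ Ω}`. -/
def triv0 (Ω : Type*) : Set (Ω × Ω × Ω) := {t | t.1 = t.2.1 ∧ t.2.1 = t.2.2}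

/-- The trivial relation `R₁ = {(x,y,y) : x ≠ y}`. -/
def triv1 (Ω : Type*) : Set (Ω × Ω × Ω) := {t | t.1 ≠ t.2.1 ∧ t.2.1 = t.2.2}

/-- The trivial relation `R₂ = {(x,y,x) : x ≠ y}`. -/
def triv2 (Ω : Type*) : Set (Ω × Ω × Ω) := {t | t.1 = t.2.2 ∧ t.1 ≠ t.2.1}

/-- The trivial relation `R₃ = {(x,x,y) : x ≠ y}`. -/
def triv3 (Ω : Type*) : Set (Ω × Ω × Ω) := {t | t.1 = t.2.1 ∧ t.2.1 ≠ t.2.2}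

/-- The set of the four trivial relations. -/
def trivials (Ω : Type*) : Set (Set (Ω × Ω × Ω)) := {triv0 Ω, triv1 Ω, triv2 Ω, triv3 Ω}

/-- Coordinate permutation of a triple: `(x₁,x₂,x₃) ↦ (x_{1σ}, x_{2σ}, x_{3σ})`. -/
def permTriple {Ω : Type*} (σ : Equiv.Perm (Fin 3)) (t : Ω × Ω × Ω) : Ω × Ω × Ω :=
  (![t.1, t.2.1, t.2.2] (σ 0), ![t.1, t.2.1, t.2.2] (σ 1), ![t.1, t.2.1, t.2.2] (σ 2))

/-- An association scheme on triples (AST) on `Ω`, viewed as the set of its relations: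
a partition of `Ω³` containing the four trivial relations and at least one further
(nontrivial) relation (i.e. `m ≥ 4`), satisfying axioms A1, A2, A3. -/
def IsAST (Ω : Type*) (A : Set (Set (Ω × Ω × Ω))) : Prop :=
  -- partition of Ω³ into nonempty relations
  (∀ R ∈ A, R.Nonempty) ∧
  (∀ t : Ω × Ω × Ω, ∃! R, R ∈ A ∧ t ∈ R) ∧
  -- the four trivial relations belong to A
  trivials Ω ⊆ A ∧
  -- m ≥ 4 : there is at least one nontrivial relation
  (∃ R ∈ A, R ∉ trivials Ω) ∧
  -- A1
  (∀ R ∈ A, R ∉ trivials Ω →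
    ∃ c : ℕ, 0 < c ∧ ∀ x y : Ω, x ≠ y → {z : Ω | (x, y, z) ∈ R}.ncard = c) ∧
  -- A2
  (∀ Ri ∈ A, ∀ Rj ∈ A, ∀ Rk ∈ A, ∀ Rl ∈ A, ∃ c : ℕ,
    ∀ x y z : Ω, (x, y, z) ∈ Rl →
      {w : Ω | (w, y, z) ∈ Ri ∧ (x, w, z) ∈ Rj ∧ (x, y, w) ∈ Rk}.ncard = c) ∧
  -- A3
  (∀ R ∈ A, ∀ σ : Equiv.Perm (Fin 3), permTriple σ '' R ∈ A)

variable {n : ℕ}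

/-- A ternary relation on `ZMod n` is a 3-circulant if it is invariant under
the simultaneous cyclic shift `+1` in all coordinates. -/
def IsCirculant (R : Set (ZMod n × ZMod n × ZMod n)) : Prop :=
  ∀ i j k : ZMod n, (i, j, k) ∈ R → (i + 1, j + 1, k + 1) ∈ R

/-- A circulant AST: an AST on `ZMod n` each of whose relations is a 3-circulant. -/
def IsCirculantAST (A : Set (Set (ZMod n × ZMod n × ZMod n))) : Prop :=
  IsAST (ZMod n) A ∧ ∀ R ∈ A, IsCirculant R

/-- A nontrivial 3-circulant: nonempty and all triples have pairwise distinct entries. -/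
def IsNontrivialCirculant (R : Set (ZMod n × ZMod n × ZMod n)) : Prop :=
  IsCirculant R ∧ R.Nonempty ∧
    ∀ t ∈ R, t.1 ≠ t.2.1 ∧ t.1 ≠ t.2.2 ∧ t.2.1 ≠ t.2.2

/-- The set `X = {(i,j) : i ≠ 0, j ≠ 0, i ≠ j}`. -/
def Xset (n : ℕ) : Set (ZMod n × ZMod n) := {p | p.1 ≠ 0 ∧ p.2 ≠ 0 ∧ p.1 ≠ p.2}

/-- The 3-circulant `R_I = {(x, i+x, j+x) : x ∈ Ω, (i,j) ∈ I}`. -/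
def RI (I : Set (ZMod n × ZMod n)) : Set (ZMod n × ZMod n × ZMod n) :=
  {t | ∃ x : ZMod n, ∃ p ∈ I, t = (x, p.1 + x, p.2 + x)}

/-- The transpose map `I ↦ I^T = {(j,i) : (i,j) ∈ I}`. -/
def transI (I : Set (ZMod n × ZMod n)) : Set (ZMod n × ZMod n) :=
  (fun p => (p.2, p.1)) '' I

/-- The map `I ↦ I^τ = {(-i, j-i) : (i,j) ∈ I}`. -/
def tauI (I : Set (ZMod n × ZMod n)) : Set (ZMod n × ZMod n) :=
  (fun p => (-p.1, p.2 - p.1)) '' I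

/-- An AST-regular partition of `X`. -/
def IsASTRegular (P : Set (Set (ZMod n × ZMod n))) : Prop :=
  -- a partition of X into nonempty parts
  (∀ I ∈ P, I ⊆ Xset n ∧ I.Nonempty) ∧
  (∀ p ∈ Xset n, ∃! I, I ∈ P ∧ p ∈ I) ∧
  -- (a) projections and regularity constants
  (∀ I ∈ P, Prod.fst '' I = {x : ZMod n | x ≠ 0} ∧ Prod.snd '' I = {x : ZMod n | x ≠ 0} ∧
    ∃ c : ℕ, 0 < c ∧ ∀ x : ZMod n, x ≠ 0 →
      {j : ZMod n | (x, j) ∈ I}.ncard = c ∧ {i : ZMod n | (i, x) ∈ I}.ncard = c) ∧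
  -- (b) invariance under T and τ
  (∀ I ∈ P, transI I ∈ P ∧ tauI I ∈ P) ∧
  -- (c) intersection numbers
  (∀ I ∈ P, ∀ J ∈ P, ∀ K ∈ P, ∀ L ∈ P, ∃ c : ℕ, ∀ q ∈ L,
    {w : ZMod n | w ≠ 0 ∧ w ≠ q.1 ∧ w ≠ q.2 ∧
      (q.1 - w, q.2 - w) ∈ I ∧ (w, q.2) ∈ J ∧ (q.1, w) ∈ K}.ncard = c)

/-- The family of relations `𝓐(𝓘) = {R₀,R₁,R₂,R₃} ∪ {R_I : I ∈ 𝓘}`. -/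
def ASTofPartition (P : Set (Set (ZMod n × ZMod n))) : Set (Set (ZMod n × ZMod n × ZMod n)) :=
  trivials (ZMod n) ∪ (RI '' P)

/-- The projection `σ₁₂ : (x₁,x₂,x₃) ↦ (x₁,x₂)`. -/
def sgm12 {Ω : Type*} (t : Ω × Ω × Ω) : Ω × Ω := (t.1, t.2.1)

/-- The projection `σ₁₃ : (x₁,x₂,x₃) ↦ (x₁,x₃)`. -/
def sgm13 {Ω : Type*} (t : Ω × Ω × Ω) : Ω × Ω := (t.1, t.2.2)

/-- The projection `σ₂₃ : (x₁,x₂,x₃) ↦ (x₂,x₃)`. -/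
def sgm23 {Ω : Type*} (t : Ω × Ω × Ω) : Ω × Ω := (t.2.1, t.2.2)

/-- `R` is thin with respect to the coordinate projection `f = σ_{ab}` if `f` is
one-to-one on `R` with image `Ω^[2] = {(x,y) : x ≠ y}`. -/
def ThinVia {Ω : Type*} (R : Set (Ω × Ω × Ω)) (f : Ω × Ω × Ω → Ω × Ω) : Prop :=
  Set.InjOn f R ∧ f '' R = {p : Ω × Ω | p.1 ≠ p.2}

/-- Regularity condition of Definition (a) with parameter `c`. -/
def RegPar (I : Set (ZMod n × ZMod n)) (c : ℕ) : Prop :=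
  Prod.fst '' I = {x : ZMod n | x ≠ 0} ∧ Prod.snd '' I = {x : ZMod n | x ≠ 0} ∧
  ∀ x : ZMod n, x ≠ 0 →
    {j : ZMod n | (x, j) ∈ I}.ncard = c ∧ {i : ZMod n | (i, x) ∈ I}.ncard = c

def ST0 : Set (ZMod n × ZMod n) := {p | p.1 = 0 ∧ p.2 = 0}
def SD : Set (ZMod n × ZMod n) := {p | p.1 = p.2 ∧ p.1 ≠ 0}
def SC : Set (ZMod n × ZMod n) := {p | p.2 = 0 ∧ p.1 ≠ 0}
def SR : Set (ZMod n × ZMod n) := {p | p.1 = 0 ∧ p.2 ≠ 0}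

def codeOf (S : Set (ZMod n × ZMod n)) : Set (ZMod n × ZMod n × ZMod n) :=
  {t | (t.2.1 - t.1, t.2.2 - t.1) ∈ S}

lemma mem_codeOf {S : Set (ZMod n × ZMod n)} {t : ZMod n × ZMod n × ZMod n} :
    t ∈ codeOf S ↔ (t.2.1 - t.1, t.2.2 - t.1) ∈ S := Iff.rfl

lemma triv0_eq : triv0 (ZMod n) = codeOf ST0 := by
  ext t
  simp only [triv0, codeOf, ST0, mem_setOf_eq]
  constructor
  · rintro ⟨h1, h2⟩; rw [← h1, ← h2, ← h1]; exact ⟨sub_self _, sub_self _⟩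
  · rintro ⟨h1, h2⟩
    have e1 := sub_eq_zero.mp h1; have e2 := sub_eq_zero.mp h2
    exact ⟨e1.symm, e1.trans e2.symm⟩

lemma triv1_eq : triv1 (ZMod n) = codeOf SD := by
  ext t
  simp only [triv1, codeOf, SD, mem_setOf_eq]
  constructor
  · rintro ⟨h1, h2⟩
    exact ⟨by rw [h2], fun h => h1 (sub_eq_zero.mp h).symm⟩
  · rintro ⟨h1, h2⟩
    exact ⟨fun h => h2 (sub_eq_zero.mpr h.symm), sub_left_inj.mp h1⟩

lemma triv2_eq : triv2 (ZMod n) = codeOf SC := by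
  ext t
  simp only [triv2, codeOf, SC, mem_setOf_eq]
  constructor
  · rintro ⟨h1, h2⟩
    exact ⟨sub_eq_zero.mpr h1.symm, fun h => h2 (sub_eq_zero.mp h).symm⟩
  · rintro ⟨h1, h2⟩
    exact ⟨(sub_eq_zero.mp h1).symm, fun h => h2 (sub_eq_zero.mpr h.symm)⟩

lemma triv3_eq : triv3 (ZMod n) = codeOf SR := by
  ext t
  simp only [triv3, codeOf, SR, mem_setOf_eq]
  constructor
  · rintro ⟨h1, h2⟩
    refine ⟨sub_eq_zero.mpr h1.symm, fun h => h2 ?_⟩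
    have e : t.2.2 = t.1 := sub_eq_zero.mp h
    rw [e]; exact h1.symm
  · rintro ⟨h1, h2⟩
    refine ⟨(sub_eq_zero.mp h1).symm, fun h => h2 ?_⟩
    rw [← h, (sub_eq_zero.mp h1)]; exact sub_self _

lemma RI_eq {I : Set (ZMod n × ZMod n)} : RI I = codeOf I := by
  ext t
  simp only [RI, codeOf, mem_setOf_eq]
  constructor
  · rintro ⟨x, p, hp, rfl⟩; simpa using hp
  · intro h
    exact ⟨t.1, _, h, by simp⟩

-- transpose/tau membership
lemma mem_transI {I : Set (ZMod n × ZMod n)} {p : ZMod n × ZMod n} :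
    p ∈ transI I ↔ (p.2, p.1) ∈ I := by
  constructor
  · rintro ⟨q, hq, rfl⟩; simpa using hq
  · intro h; exact ⟨(p.2, p.1), h, by simp⟩

lemma mem_tauI {I : Set (ZMod n × ZMod n)} {p : ZMod n × ZMod n} :
    p ∈ tauI I ↔ (-p.1, p.2 - p.1) ∈ I := by
  constructor
  · rintro ⟨q, hq, rfl⟩; simpa using hq
  · intro h; exact ⟨(-p.1, p.2 - p.1), h, by simp⟩

/-- the five classes of "codes" -/
def IsCode (P : Set (Set (ZMod n × ZMod n))) (S : Set (ZMod n × ZMod n)) : Prop :=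
  S = ST0 ∨ S = SD ∨ S = SC ∨ S = SR ∨ S ∈ P

section codes
variable {P : Set (Set (ZMod n × ZMod n))} (hP : IsASTRegular P)

lemma not_trivcode_of_memX {p : ZMod n × ZMod n} (hp : p ∈ Xset n) :
    p ∉ (ST0 : Set (ZMod n × ZMod n)) ∧ p ∉ (SD : Set (ZMod n × ZMod n)) ∧
    p ∉ (SC : Set (ZMod n × ZMod n)) ∧ p ∉ (SR : Set (ZMod n × ZMod n)) := by
  obtain ⟨h1, h2, h3⟩ := hp
  exact ⟨fun h => h1 h.1, fun h => h3 h.1, fun h => h2 h.1, fun h => h1 h.1⟩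

include hP in
lemma code_eq {S S' : Set (ZMod n × ZMod n)} (hS : IsCode P S) (hS' : IsCode P S')
    {p : ZMod n × ZMod n} (h : p ∈ S) (h' : p ∈ S') : S = S' := by
  rcases hS with rfl | rfl | rfl | rfl | hS <;>
    rcases hS' with rfl | rfl | rfl | rfl | hS'
  all_goals try rfl
  all_goals try exact (hP.2.1 p ((hP.1 _ hS).1 h)).unique ⟨hS, h⟩ ⟨hS', h'⟩
  all_goals exfalso
  all_goals try have hX := (hP.1 _ hS).1 h
  all_goals try have hX := (hP.1 _ hS').1 h'
  all_goals simp_all [ST0, SD, SC, SR, Xset]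
end codes

section codes2
variable {P : Set (Set (ZMod n × ZMod n))} (hP : IsASTRegular P)

lemma transI_ST0 : transI (ST0 : Set (ZMod n × ZMod n)) = ST0 := by
  ext p; simp only [mem_transI, ST0, mem_setOf_eq]; tauto
lemma transI_SD : transI (SD : Set (ZMod n × ZMod n)) = SD := by
  ext p; simp only [mem_transI, SD, mem_setOf_eq]
  constructor
  · rintro ⟨h1, h2⟩; exact ⟨h1.symm, fun e => h2 (h1.symm ▸ e)⟩
  · rintro ⟨h1, h2⟩; exact ⟨h1.symm, fun e => h2 (h1.symm ▸ e)⟩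
lemma transI_SC : transI (SC : Set (ZMod n × ZMod n)) = SR := by
  ext p; simp only [mem_transI, SC, SR, mem_setOf_eq]
lemma transI_SR : transI (SR : Set (ZMod n × ZMod n)) = SC := by
  ext p; simp only [mem_transI, SC, SR, mem_setOf_eq]
lemma tauI_ST0 : tauI (ST0 : Set (ZMod n × ZMod n)) = ST0 := by
  ext p
  simp only [mem_tauI, ST0, mem_setOf_eq, neg_eq_zero, sub_eq_zero]
  constructor
  · rintro ⟨h1, h2⟩; exact ⟨h1, h2.trans h1⟩
  · rintro ⟨h1, h2⟩; exact ⟨h1, h2.trans h1.symm⟩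
lemma tauI_SD : tauI (SD : Set (ZMod n × ZMod n)) = SC := by
  ext p
  simp only [mem_tauI, SD, SC, mem_setOf_eq, ne_eq, neg_eq_zero]
  constructor
  · rintro ⟨h1, h2⟩
    refine ⟨?_, h2⟩
    have : p.2 = -p.1 + p.1 := by linear_combination -h1
    simpa using this
  · rintro ⟨h1, h2⟩
    exact ⟨by linear_combination -h1, h2⟩
lemma tauI_SC : tauI (SC : Set (ZMod n × ZMod n)) = SD := by
  ext p
  simp only [mem_tauI, SD, SC, mem_setOf_eq, ne_eq, neg_eq_zero, sub_eq_zero]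
  constructor
  · rintro ⟨h1, h2⟩; exact ⟨h1.symm, h2⟩
  · rintro ⟨h1, h2⟩; exact ⟨h1.symm, h2⟩
lemma tauI_SR : tauI (SR : Set (ZMod n × ZMod n)) = SR := by
  ext p
  simp only [mem_tauI, SR, mem_setOf_eq, ne_eq, neg_eq_zero, sub_ne_zero]
  constructor
  · rintro ⟨h1, h2⟩; exact ⟨h1, fun e => h2 (by rw [e, h1])⟩
  · rintro ⟨h1, h2⟩; exact ⟨h1, fun e => h2 (by rw [← h1, ← e])⟩

include hP in
lemma IsCode.transI {S : Set (ZMod n × ZMod n)} (hS : IsCode P S) :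
    IsCode P (transI S) := by
  rcases hS with rfl | rfl | rfl | rfl | hS
  · rw [transI_ST0]; exact Or.inl rfl
  · rw [transI_SD]; exact Or.inr (Or.inl rfl)
  · rw [transI_SC]; right; right; right; left; rfl
  · rw [transI_SR]; right; right; left; rfl
  · exact Or.inr (Or.inr (Or.inr (Or.inr (hP.2.2.2.1 _ hS).1)))

include hP in
lemma IsCode.tauI {S : Set (ZMod n × ZMod n)} (hS : IsCode P S) :
    IsCode P (tauI S) := by
  rcases hS with rfl | rfl | rfl | rfl | hS
  · rw [tauI_ST0]; exact Or.inl rfl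
  · rw [tauI_SD]; right; right; left; rfl
  · rw [tauI_SC]; right; left; rfl
  · rw [tauI_SR]; right; right; right; left; rfl
  · exact Or.inr (Or.inr (Or.inr (Or.inr (hP.2.2.2.1 _ hS).2)))

lemma mem_of_mem_tauI {S : Set (ZMod n × ZMod n)} {p : ZMod n × ZMod n} :
    p ∈ tauI S ↔ (-p.1, p.2 - p.1) ∈ S := mem_tauI

/-- `(a-u, b-u) ∈ S ↔ (u-a, b-a) ∈ tauI S` -/
lemma tau_shift {S : Set (ZMod n × ZMod n)} {a b u : ZMod n} :
    (a - u, b - u) ∈ S ↔ (u - a, b - a) ∈ tauI S := by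
  rw [mem_tauI]
  constructor <;> intro h <;>
    · convert h using 2 <;> ring
end codes2

section counts
variable {P : Set (Set (ZMod n × ZMod n))} (hP : IsASTRegular P)

lemma ncard_shift (x : ZMod n) (S : Set (ZMod n)) :
    {w : ZMod n | w - x ∈ S}.ncard = S.ncard := by
  have : {w : ZMod n | w - x ∈ S} = (· + x) '' S := by
    ext w
    simp only [mem_setOf_eq, mem_image]
    constructor
    · intro h; exact ⟨w - x, h, by ring⟩
    · rintro ⟨s, hs, rfl⟩; simpa using hs
  rw [this, Set.ncard_image_of_injective _ (add_left_injective x)]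

include hP in
lemma code_row [NeZero n] {S : Set (ZMod n × ZMod n)} (hS : IsCode P S) :
    ∃ c : ℕ, ∀ a : ZMod n, a ≠ 0 → {u : ZMod n | (a, u) ∈ S}.ncard = c := by
  rcases hS with rfl | rfl | rfl | rfl | hS
  · exact ⟨0, fun a ha => by
      rw [Set.ncard_eq_zero]
      ext u; simp [ST0, ha]⟩
  · exact ⟨1, fun a ha => by
      have : {u : ZMod n | (a, u) ∈ SD} = {a} := by
        ext u; simp only [SD, mem_setOf_eq, mem_singleton_iff, ha, and_true, ne_eq,
          not_false_iff]
        exact eq_comm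
      rw [this, Set.ncard_singleton]⟩
  · exact ⟨1, fun a ha => by
      have : {u : ZMod n | (a, u) ∈ SC} = {0} := by
        ext u; simp [SC, ha]
      rw [this, Set.ncard_singleton]⟩
  · exact ⟨0, fun a ha => by
      rw [Set.ncard_eq_zero]
      ext u; simp [SR, ha]⟩
  · obtain ⟨c, _, hc⟩ := (hP.2.2.1 _ hS).2.2
    exact ⟨c, fun a ha => (hc a ha).1⟩

include hP in
lemma code_col [NeZero n] {S : Set (ZMod n × ZMod n)} (hS : IsCode P S) :
    ∃ c : ℕ, ∀ a : ZMod n, a ≠ 0 → {u : ZMod n | (u, a) ∈ S}.ncard = c := by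
  rcases hS with rfl | rfl | rfl | rfl | hS
  · exact ⟨0, fun a ha => by
      rw [Set.ncard_eq_zero]
      ext u; simp [ST0, ha]⟩
  · exact ⟨1, fun a ha => by
      have : {u : ZMod n | (u, a) ∈ SD} = {a} := by
        ext u; simp [SD, mem_setOf_eq, mem_singleton_iff, ha]
        intro h; rw [h]; exact ha
      rw [this, Set.ncard_singleton]⟩
  · exact ⟨0, fun a ha => by
      rw [Set.ncard_eq_zero]
      ext u; simp [SC, ha]⟩
  · exact ⟨1, fun a ha => by
      have : {u : ZMod n | (u, a) ∈ SR} = {0} := by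
        ext u; simp [SR, ha]
      rw [this, Set.ncard_singleton]⟩
  · obtain ⟨c, _, hc⟩ := (hP.2.2.1 _ hS).2.2
    exact ⟨c, fun a ha => (hc a ha).2⟩

include hP in
lemma mem_diag_iff {S : Set (ZMod n × ZMod n)} (hS : IsCode P S) {a : ZMod n}
    (ha : a ≠ 0) : (a, a) ∈ S ↔ S = SD := by
  constructor
  · intro h
    exact code_eq hP hS (Or.inr (Or.inl rfl)) h (show (a,a) ∈ SD from ⟨rfl, ha⟩)
  · rintro rfl; exact ⟨rfl, ha⟩

include hP in
lemma mem_rowpt_iff {S : Set (ZMod n × ZMod n)} (hS : IsCode P S) {a : ZMod n}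
    (ha : a ≠ 0) : (a, (0:ZMod n)) ∈ S ↔ S = SC := by
  constructor
  · intro h
    exact code_eq hP hS (Or.inr (Or.inr (Or.inl rfl))) h (show (a,(0:ZMod n)) ∈ SC from ⟨rfl, ha⟩)
  · rintro rfl; exact ⟨rfl, ha⟩

include hP in
lemma mem_colpt_iff {S : Set (ZMod n × ZMod n)} (hS : IsCode P S) {b : ZMod n}
    (hb : b ≠ 0) : ((0:ZMod n), b) ∈ S ↔ S = SR := by
  constructor
  · intro h
    exact code_eq hP hS (Or.inr (Or.inr (Or.inr (Or.inl rfl)))) h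
      (show ((0:ZMod n), b) ∈ SR from ⟨rfl, hb⟩)
  · rintro rfl; exact ⟨rfl, hb⟩

include hP in
lemma mem_part_iff {S L : Set (ZMod n × ZMod n)} (hS : IsCode P S) (hL : L ∈ P)
    {p : ZMod n × ZMod n} (hp : p ∈ L) : p ∈ S ↔ S = L := by
  constructor
  · intro h
    exact code_eq hP hS (Or.inr (Or.inr (Or.inr (Or.inr hL)))) h hp
  · rintro rfl; exact hp
end counts

section key
variable {P : Set (Set (ZMod n × ZMod n))} (hP : IsASTRegular P)

lemma tau1_mem {S : Set (ZMod n × ZMod n)} {b u : ZMod n} :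
    (0 - u, b - u) ∈ S ↔ (u, b) ∈ tauI S := by
  rw [mem_tauI]
  constructor <;> intro h <;> (convert h using 2 <;> ring)

lemma tau3_mem {S : Set (ZMod n × ZMod n)} {a u : ZMod n} :
    (a - u, 0 - u) ∈ S ↔ (a, u) ∈ tauI (transI (tauI S)) := by
  rw [mem_tauI, mem_transI, mem_tauI]
  constructor <;> intro h <;> (convert h using 2 <;> ring)

include hP in
lemma key [NeZero n] {Si Sj Sk Sl : Set (ZMod n × ZMod n)}
    (hSi : IsCode P Si) (hSj : IsCode P Sj) (hSk : IsCode P Sk) (hSl : IsCode P Sl) :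
    ∃ c : ℕ, ∀ a b : ZMod n, (a, b) ∈ Sl →
      {u : ZMod n | (a - u, b - u) ∈ Si ∧ (u, b) ∈ Sj ∧ (a, u) ∈ Sk}.ncard = c := by
  rcases hSl with rfl | rfl | rfl | rfl | hL
  · -- Sl = ST0 : single point (0,0)
    refine ⟨{u : ZMod n | ((0:ZMod n) - u, (0:ZMod n) - u) ∈ Si ∧ (u, (0:ZMod n)) ∈ Sj ∧
      ((0:ZMod n), u) ∈ Sk}.ncard, fun a b hab => ?_⟩
    simp only [ST0, mem_setOf_eq] at hab
    obtain ⟨ha, hb⟩ := hab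
    subst ha; subst hb; rfl
  · -- Sl = SD : a = b ≠ 0
    by_cases hi0 : Si = ST0
    · subst hi0
      by_cases hjk : Sj = SD ∧ Sk = SD
      · refine ⟨1, fun a b hab => ?_⟩
        simp only [SD, mem_setOf_eq] at hab
        obtain ⟨hab1, ha⟩ := hab
        subst hab1
        obtain ⟨rfl, rfl⟩ := hjk
        have : {u : ZMod n | (a - u, a - u) ∈ ST0 ∧ (u, a) ∈ SD ∧ (a, u) ∈ SD} = {a} := by
          ext u
          simp only [mem_setOf_eq, mem_singleton_iff, ST0, SD]
          constructor
          · rintro ⟨⟨h1, _⟩, _⟩; exact (sub_eq_zero.mp h1).symm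
          · rintro rfl
            exact ⟨⟨sub_self _, sub_self _⟩, ⟨rfl, ha⟩, ⟨rfl, ha⟩⟩
        rw [this, Set.ncard_singleton]
      · refine ⟨0, fun a b hab => ?_⟩
        simp only [SD, mem_setOf_eq] at hab
        obtain ⟨hab1, ha⟩ := hab
        subst hab1
        have : {u : ZMod n | (a - u, a - u) ∈ ST0 ∧ (u, a) ∈ Sj ∧ (a, u) ∈ Sk} = ∅ := by
          ext u
          simp only [mem_setOf_eq, mem_empty_iff_false, iff_false]
          rintro ⟨h1, hj, hk⟩
          obtain ⟨h1a, -⟩ := h1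
          have hua : u = a := (sub_eq_zero.mp h1a).symm
          subst hua
          exact hjk ⟨(mem_diag_iff hP hSj ha).mp hj, (mem_diag_iff hP hSk ha).mp hk⟩
        rw [this]; exact Set.ncard_empty _
    · by_cases hiD : Si = SD
      · subst hiD
        by_cases hjk : transI Sk = Sj
        · by_cases hjD : Sj = SD
          · refine ⟨0, fun a b hab => ?_⟩
            simp only [SD, mem_setOf_eq] at hab
            obtain ⟨hab1, ha⟩ := hab
            subst hab1
            subst hjD
            have : {u : ZMod n | (a - u, a - u) ∈ SD ∧ (u, a) ∈ SD ∧ (a, u) ∈ Sk} = ∅ := by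
              ext u
              simp only [mem_setOf_eq, mem_empty_iff_false, iff_false]
              rintro ⟨⟨-, h2⟩, ⟨hj1, -⟩, -⟩
              have hj1' : u = a := hj1
              have h2' : a - u ≠ 0 := h2
              exact h2' (by rw [hj1', sub_self])
            rw [this]; exact Set.ncard_empty _
          · obtain ⟨c, hc⟩ := code_col hP hSj
            refine ⟨c, fun a b hab => ?_⟩
            simp only [SD, mem_setOf_eq] at hab
            obtain ⟨hab1, ha⟩ := hab
            subst hab1
            have : {u : ZMod n | (a - u, a - u) ∈ SD ∧ (u, a) ∈ Sj ∧ (a, u) ∈ Sk}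
                = {u : ZMod n | (u, a) ∈ Sj} := by
              ext u
              simp only [mem_setOf_eq]
              constructor
              · rintro ⟨-, h2, -⟩; exact h2
              · intro h2
                have hua : u ≠ a := by
                  rintro rfl
                  exact hjD ((mem_diag_iff hP hSj ha).mp h2)
                refine ⟨⟨rfl, sub_ne_zero.mpr (fun e => hua e.symm)⟩, h2, ?_⟩
                rw [← hjk] at h2
                exact mem_transI.mp h2
            rw [this]
            exact hc a ha
        · refine ⟨0, fun a b hab => ?_⟩
          simp only [SD, mem_setOf_eq] at hab
          obtain ⟨hab1, ha⟩ := hab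
          subst hab1
          have : {u : ZMod n | (a - u, a - u) ∈ SD ∧ (u, a) ∈ Sj ∧ (a, u) ∈ Sk} = ∅ := by
            ext u
            simp only [mem_setOf_eq, mem_empty_iff_false, iff_false]
            rintro ⟨-, hj, hk⟩
            exact hjk (code_eq hP (IsCode.transI hP hSk) hSj (mem_transI.mpr hk) hj)
          rw [this]; exact Set.ncard_empty _
      · refine ⟨0, fun a b hab => ?_⟩
        simp only [SD, mem_setOf_eq] at hab
        obtain ⟨hab1, ha⟩ := hab
        subst hab1
        have : {u : ZMod n | (a - u, a - u) ∈ Si ∧ (u, a) ∈ Sj ∧ (a, u) ∈ Sk} = ∅ := by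
          ext u
          simp only [mem_setOf_eq, mem_empty_iff_false, iff_false]
          rintro ⟨h1, -, -⟩
          by_cases hau : a - u = 0
          · exact hi0 (code_eq hP hSi (Or.inl rfl) h1 (by rw [hau]; exact ⟨rfl, rfl⟩))
          · exact hiD (code_eq hP hSi (Or.inr (Or.inl rfl)) h1 ⟨rfl, hau⟩)
        rw [this]; exact Set.ncard_empty _
  · -- Sl = SC : a ≠ 0, b = 0
    by_cases hj0 : Sj = ST0
    · subst hj0
      by_cases hik : Si = SC ∧ Sk = SC
      · refine ⟨1, fun a b hab => ?_⟩
        simp only [SC, mem_setOf_eq] at hab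
        obtain ⟨hb, ha⟩ := hab
        subst hb
        obtain ⟨rfl, rfl⟩ := hik
        have : {u : ZMod n | (a - u, 0 - u) ∈ SC ∧ (u, 0) ∈ ST0 ∧ (a, u) ∈ SC} = {0} := by
          ext u
          simp only [mem_setOf_eq, mem_singleton_iff]
          constructor
          · rintro ⟨-, hj, -⟩; exact hj.1
          · rintro rfl
            exact ⟨⟨show (0:ZMod n) - 0 = 0 by rw [sub_zero], show a - 0 ≠ 0 by rw [sub_zero]; exact ha⟩, ⟨rfl, rfl⟩, ⟨rfl, ha⟩⟩
        rw [this, Set.ncard_singleton]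
      · refine ⟨0, fun a b hab => ?_⟩
        simp only [SC, mem_setOf_eq] at hab
        obtain ⟨hb, ha⟩ := hab
        subst hb
        have : {u : ZMod n | (a - u, 0 - u) ∈ Si ∧ (u, 0) ∈ ST0 ∧ (a, u) ∈ Sk} = ∅ := by
          ext u
          simp only [mem_setOf_eq, mem_empty_iff_false, iff_false]
          rintro ⟨h1, hj, hk⟩
          have hu : u = 0 := hj.1
          subst hu
          have e : (a - (0:ZMod n), (0:ZMod n) - 0) = (a, (0:ZMod n)) := by
            rw [sub_zero, sub_zero]
          rw [e] at h1
          exact hik ⟨(mem_rowpt_iff hP hSi ha).mp h1, (mem_rowpt_iff hP hSk ha).mp hk⟩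
        rw [this]; exact Set.ncard_empty _
    · by_cases hjC : Sj = SC
      · subst hjC
        have hSi' : IsCode P (tauI (transI (tauI Si))) :=
          IsCode.tauI hP (IsCode.transI hP (IsCode.tauI hP hSi))
        by_cases hik : tauI (transI (tauI Si)) = Sk
        · by_cases hkC : Sk = SC
          · refine ⟨0, fun a b hab => ?_⟩
            simp only [SC, mem_setOf_eq] at hab
            obtain ⟨hb, ha⟩ := hab
            subst hb
            have : {u : ZMod n | (a - u, 0 - u) ∈ Si ∧ (u, 0) ∈ SC ∧ (a, u) ∈ Sk} = ∅ := by
              ext u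
              simp only [mem_setOf_eq, mem_empty_iff_false, iff_false]
              rintro ⟨-, hj, hk⟩
              rw [hkC] at hk
              exact hj.2 hk.1
            rw [this]; exact Set.ncard_empty _
          · obtain ⟨c, hc⟩ := code_row hP hSk
            refine ⟨c, fun a b hab => ?_⟩
            simp only [SC, mem_setOf_eq] at hab
            obtain ⟨hb, ha⟩ := hab
            subst hb
            have : {u : ZMod n | (a - u, 0 - u) ∈ Si ∧ (u, 0) ∈ SC ∧ (a, u) ∈ Sk}
                = {u : ZMod n | (a, u) ∈ Sk} := by
              ext u
              simp only [mem_setOf_eq]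
              constructor
              · rintro ⟨-, -, hk⟩; exact hk
              · intro hk
                have hu : u ≠ 0 := by
                  rintro rfl
                  exact hkC ((mem_rowpt_iff hP hSk ha).mp hk)
                refine ⟨?_, ⟨rfl, hu⟩, hk⟩
                rw [tau3_mem, hik]
                exact hk
            rw [this]
            exact hc a ha
        · refine ⟨0, fun a b hab => ?_⟩
          simp only [SC, mem_setOf_eq] at hab
          obtain ⟨hb, ha⟩ := hab
          subst hb
          have : {u : ZMod n | (a - u, 0 - u) ∈ Si ∧ (u, 0) ∈ SC ∧ (a, u) ∈ Sk} = ∅ := by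
            ext u
            simp only [mem_setOf_eq, mem_empty_iff_false, iff_false]
            rintro ⟨h1, -, hk⟩
            rw [tau3_mem] at h1
            exact hik (code_eq hP hSi' hSk h1 hk)
          rw [this]; exact Set.ncard_empty _
      · refine ⟨0, fun a b hab => ?_⟩
        simp only [SC, mem_setOf_eq] at hab
        obtain ⟨hb, ha⟩ := hab
        subst hb
        have : {u : ZMod n | (a - u, 0 - u) ∈ Si ∧ (u, 0) ∈ Sj ∧ (a, u) ∈ Sk} = ∅ := by
          ext u
          simp only [mem_setOf_eq, mem_empty_iff_false, iff_false]
          rintro ⟨-, hj, -⟩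
          by_cases hu : u = 0
          · subst hu
            exact hj0 (code_eq hP hSj (Or.inl rfl) hj ⟨rfl, rfl⟩)
          · exact hjC ((mem_rowpt_iff hP hSj hu).mp hj)
        rw [this]; exact Set.ncard_empty _
  · -- Sl = SR : a = 0, b ≠ 0
    by_cases hk0 : Sk = ST0
    · subst hk0
      by_cases hij : Si = SR ∧ Sj = SR
      · refine ⟨1, fun a b hab => ?_⟩
        simp only [SR, mem_setOf_eq] at hab
        obtain ⟨ha, hb⟩ := hab
        subst ha
        obtain ⟨rfl, rfl⟩ := hij
        have : {u : ZMod n | (0 - u, b - u) ∈ SR ∧ (u, b) ∈ SR ∧ ((0:ZMod n), u) ∈ ST0} = {0} := by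
          ext u
          simp only [mem_setOf_eq, mem_singleton_iff]
          constructor
          · rintro ⟨-, -, hk⟩; exact hk.2
          · rintro rfl
            exact ⟨⟨show (0:ZMod n) - 0 = 0 by rw [sub_zero], show b - 0 ≠ 0 by rw [sub_zero]; exact hb⟩, ⟨rfl, hb⟩, ⟨rfl, rfl⟩⟩
        rw [this, Set.ncard_singleton]
      · refine ⟨0, fun a b hab => ?_⟩
        simp only [SR, mem_setOf_eq] at hab
        obtain ⟨ha, hb⟩ := hab
        subst ha
        have : {u : ZMod n | (0 - u, b - u) ∈ Si ∧ (u, b) ∈ Sj ∧ ((0:ZMod n), u) ∈ ST0} = ∅ := by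
          ext u
          simp only [mem_setOf_eq, mem_empty_iff_false, iff_false]
          rintro ⟨h1, hj, hk⟩
          have hu : u = 0 := hk.2
          subst hu
          have e : ((0:ZMod n) - 0, b - 0) = ((0:ZMod n), b) := by rw [sub_zero, sub_zero]
          rw [e] at h1
          exact hij ⟨(mem_colpt_iff hP hSi hb).mp h1, (mem_colpt_iff hP hSj hb).mp hj⟩
        rw [this]; exact Set.ncard_empty _
    · by_cases hkR : Sk = SR
      · subst hkR
        have hSi' : IsCode P (tauI Si) := IsCode.tauI hP hSi
        by_cases hij : tauI Si = Sj
        · by_cases hjR : Sj = SR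
          · refine ⟨0, fun a b hab => ?_⟩
            simp only [SR, mem_setOf_eq] at hab
            obtain ⟨ha, hb⟩ := hab
            subst ha
            have : {u : ZMod n | (0 - u, b - u) ∈ Si ∧ (u, b) ∈ Sj ∧ ((0:ZMod n), u) ∈ SR} = ∅ := by
              ext u
              simp only [mem_setOf_eq, mem_empty_iff_false, iff_false]
              rintro ⟨-, hj, hk⟩
              rw [hjR] at hj
              exact hk.2 hj.1
            rw [this]; exact Set.ncard_empty _
          · obtain ⟨c, hc⟩ := code_col hP hSj
            refine ⟨c, fun a b hab => ?_⟩
            simp only [SR, mem_setOf_eq] at hab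
            obtain ⟨ha, hb⟩ := hab
            subst ha
            have : {u : ZMod n | (0 - u, b - u) ∈ Si ∧ (u, b) ∈ Sj ∧ ((0:ZMod n), u) ∈ SR}
                = {u : ZMod n | (u, b) ∈ Sj} := by
              ext u
              simp only [mem_setOf_eq]
              constructor
              · rintro ⟨-, hj, -⟩; exact hj
              · intro hj
                have hu : u ≠ 0 := by
                  rintro rfl
                  exact hjR ((mem_colpt_iff hP hSj hb).mp hj)
                refine ⟨?_, hj, ⟨rfl, hu⟩⟩
                rw [tau1_mem, hij]
                exact hj
            rw [this]
            exact hc b hb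
        · refine ⟨0, fun a b hab => ?_⟩
          simp only [SR, mem_setOf_eq] at hab
          obtain ⟨ha, hb⟩ := hab
          subst ha
          have : {u : ZMod n | (0 - u, b - u) ∈ Si ∧ (u, b) ∈ Sj ∧ ((0:ZMod n), u) ∈ SR} = ∅ := by
            ext u
            simp only [mem_setOf_eq, mem_empty_iff_false, iff_false]
            rintro ⟨h1, hj, -⟩
            rw [tau1_mem] at h1
            exact hij (code_eq hP hSi' hSj h1 hj)
          rw [this]; exact Set.ncard_empty _
      · refine ⟨0, fun a b hab => ?_⟩
        simp only [SR, mem_setOf_eq] at hab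
        obtain ⟨ha, hb⟩ := hab
        subst ha
        have : {u : ZMod n | (0 - u, b - u) ∈ Si ∧ (u, b) ∈ Sj ∧ ((0:ZMod n), u) ∈ Sk} = ∅ := by
          ext u
          simp only [mem_setOf_eq, mem_empty_iff_false, iff_false]
          rintro ⟨-, -, hk⟩
          by_cases hu : u = 0
          · subst hu
            exact hk0 (code_eq hP hSk (Or.inl rfl) hk ⟨rfl, rfl⟩)
          · exact hkR ((mem_colpt_iff hP hSk hu).mp hk)
        rw [this]; exact Set.ncard_empty _
  · -- Sl = L ∈ P
    have hXL : ∀ a b : ZMod n, (a, b) ∈ Sl → a ≠ 0 ∧ b ≠ 0 ∧ a ≠ b := fun a b hab =>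
      (hP.1 _ hL).1 hab
    rcases hSj with rfl | rfl | rfl | rfl | hJ
    · -- Sj = ST0 : empty since b ≠ 0
      refine ⟨0, fun a b hab => ?_⟩
      obtain ⟨-, hb, -⟩ := hXL a b hab
      have : {u : ZMod n | (a - u, b - u) ∈ Si ∧ (u, b) ∈ ST0 ∧ (a, u) ∈ Sk} = ∅ := by
        ext u
        simp only [mem_setOf_eq, mem_empty_iff_false, iff_false]
        rintro ⟨-, hj, -⟩
        exact hb hj.2
      rw [this]; exact Set.ncard_empty _
    · -- Sj = SD : u = b forced
      by_cases h : Si = SC ∧ Sk = Sl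
      · refine ⟨1, fun a b hab => ?_⟩
        obtain ⟨ha, hb, hne⟩ := hXL a b hab
        obtain ⟨rfl, hKL⟩ := h
        have : {u : ZMod n | (a - u, b - u) ∈ SC ∧ (u, b) ∈ SD ∧ (a, u) ∈ Sk} = {b} := by
          ext u
          simp only [mem_setOf_eq, mem_singleton_iff]
          constructor
          · rintro ⟨-, hj, -⟩; exact hj.1
          · rintro rfl
            exact ⟨⟨sub_self _, sub_ne_zero.mpr hne⟩, ⟨rfl, hb⟩, by rw [hKL]; exact hab⟩
        rw [this, Set.ncard_singleton]
      · refine ⟨0, fun a b hab => ?_⟩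
        obtain ⟨ha, hb, hne⟩ := hXL a b hab
        have : {u : ZMod n | (a - u, b - u) ∈ Si ∧ (u, b) ∈ SD ∧ (a, u) ∈ Sk} = ∅ := by
          ext u
          simp only [mem_setOf_eq, mem_empty_iff_false, iff_false]
          rintro ⟨h1, hj, hk⟩
          have hu : b = u := hj.1.symm
          subst hu
          have e : (a - b, b - b) = (a - b, (0:ZMod n)) := by rw [sub_self]
          rw [e] at h1
          exact h ⟨(mem_rowpt_iff hP hSi (sub_ne_zero.mpr hne)).mp h1,
            (mem_part_iff hP hSk hL hab).mp hk⟩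
        rw [this]; exact Set.ncard_empty _
    · -- Sj = SC : empty since b ≠ 0
      refine ⟨0, fun a b hab => ?_⟩
      obtain ⟨-, hb, -⟩ := hXL a b hab
      have : {u : ZMod n | (a - u, b - u) ∈ Si ∧ (u, b) ∈ SC ∧ (a, u) ∈ Sk} = ∅ := by
        ext u
        simp only [mem_setOf_eq, mem_empty_iff_false, iff_false]
        rintro ⟨-, hj, -⟩
        exact hb hj.1
      rw [this]; exact Set.ncard_empty _
    · -- Sj = SR : u = 0 forced
      by_cases h : Si = Sl ∧ Sk = SC
      · refine ⟨1, fun a b hab => ?_⟩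
        obtain ⟨ha, hb, hne⟩ := hXL a b hab
        obtain ⟨hIL, rfl⟩ := h
        have : {u : ZMod n | (a - u, b - u) ∈ Si ∧ (u, b) ∈ SR ∧ (a, u) ∈ SC} = {0} := by
          ext u
          simp only [mem_setOf_eq, mem_singleton_iff]
          constructor
          · rintro ⟨-, hj, -⟩; exact hj.1
          · rintro rfl
            refine ⟨?_, ⟨rfl, hb⟩, ⟨rfl, ha⟩⟩
            have e : (a - 0, b - 0) = (a, b) := by rw [sub_zero, sub_zero]
            rw [e, hIL]; exact hab
        rw [this, Set.ncard_singleton]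
      · refine ⟨0, fun a b hab => ?_⟩
        obtain ⟨ha, hb, hne⟩ := hXL a b hab
        have : {u : ZMod n | (a - u, b - u) ∈ Si ∧ (u, b) ∈ SR ∧ (a, u) ∈ Sk} = ∅ := by
          ext u
          simp only [mem_setOf_eq, mem_empty_iff_false, iff_false]
          rintro ⟨h1, hj, hk⟩
          have hu : u = 0 := hj.1
          subst hu
          have e : (a - 0, b - 0) = (a, b) := by rw [sub_zero, sub_zero]
          rw [e] at h1
          exact h ⟨(mem_part_iff hP hSi hL hab).mp h1, (mem_rowpt_iff hP hSk ha).mp hk⟩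
        rw [this]; exact Set.ncard_empty _
    · -- Sj = J ∈ P
      rcases hSk with rfl | rfl | rfl | rfl | hK
      · -- Sk = ST0 : a ≠ 0
        refine ⟨0, fun a b hab => ?_⟩
        obtain ⟨ha, -, -⟩ := hXL a b hab
        have : {u : ZMod n | (a - u, b - u) ∈ Si ∧ (u, b) ∈ Sj ∧ (a, u) ∈ ST0} = ∅ := by
          ext u
          simp only [mem_setOf_eq, mem_empty_iff_false, iff_false]
          rintro ⟨-, -, hk⟩
          exact ha hk.1
        rw [this]; exact Set.ncard_empty _
      · -- Sk = SD : u = a forced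
        by_cases h : Si = SR ∧ Sj = Sl
        · refine ⟨1, fun a b hab => ?_⟩
          obtain ⟨ha, hb, hne⟩ := hXL a b hab
          obtain ⟨rfl, hJL⟩ := h
          have : {u : ZMod n | (a - u, b - u) ∈ SR ∧ (u, b) ∈ Sj ∧ (a, u) ∈ SD} = {a} := by
            ext u
            simp only [mem_setOf_eq, mem_singleton_iff]
            constructor
            · rintro ⟨-, -, hk⟩; exact hk.1.symm
            · rintro rfl
              exact ⟨⟨sub_self _, sub_ne_zero.mpr (fun e => hne e.symm)⟩,
                by rw [hJL]; exact hab, ⟨rfl, ha⟩⟩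
          rw [this, Set.ncard_singleton]
        · refine ⟨0, fun a b hab => ?_⟩
          obtain ⟨ha, hb, hne⟩ := hXL a b hab
          have : {u : ZMod n | (a - u, b - u) ∈ Si ∧ (u, b) ∈ Sj ∧ (a, u) ∈ SD} = ∅ := by
            ext u
            simp only [mem_setOf_eq, mem_empty_iff_false, iff_false]
            rintro ⟨h1, hj, hk⟩
            have hu : a = u := hk.1
            subst hu
            have e : (a - a, b - a) = ((0:ZMod n), b - a) := by rw [sub_self]
            rw [e] at h1
            exact h ⟨(mem_colpt_iff hP hSi (sub_ne_zero.mpr (fun e => hne e.symm))).mp h1,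
              (mem_part_iff hP (Or.inr (Or.inr (Or.inr (Or.inr hJ)))) hL hab).mp hj⟩
          rw [this]; exact Set.ncard_empty _
      · -- Sk = SC : u = 0, but (0, b) ∉ J
        refine ⟨0, fun a b hab => ?_⟩
        have : {u : ZMod n | (a - u, b - u) ∈ Si ∧ (u, b) ∈ Sj ∧ (a, u) ∈ SC} = ∅ := by
          ext u
          simp only [mem_setOf_eq, mem_empty_iff_false, iff_false]
          rintro ⟨-, hj, hk⟩
          have hu : u = 0 := hk.1
          subst hu
          exact ((hP.1 _ hJ).1 hj).1 rfl
        rw [this]; exact Set.ncard_empty _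
      · -- Sk = SR : a ≠ 0
        refine ⟨0, fun a b hab => ?_⟩
        obtain ⟨ha, -, -⟩ := hXL a b hab
        have : {u : ZMod n | (a - u, b - u) ∈ Si ∧ (u, b) ∈ Sj ∧ (a, u) ∈ SR} = ∅ := by
          ext u
          simp only [mem_setOf_eq, mem_empty_iff_false, iff_false]
          rintro ⟨-, -, hk⟩
          exact ha hk.1
        rw [this]; exact Set.ncard_empty _
      · -- Sk = K ∈ P
        rcases hSi with rfl | rfl | rfl | rfl | hI
        · -- Si = ST0 : a = b forced, impossible
          refine ⟨0, fun a b hab => ?_⟩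
          obtain ⟨-, -, hne⟩ := hXL a b hab
          have : {u : ZMod n | (a - u, b - u) ∈ ST0 ∧ (u, b) ∈ Sj ∧ (a, u) ∈ Sk} = ∅ := by
            ext u
            simp only [mem_setOf_eq, mem_empty_iff_false, iff_false]
            rintro ⟨h1, -, -⟩
            have e1 : a - u = 0 := h1.1
            have e2 : b - u = 0 := h1.2
            exact hne ((sub_eq_zero.mp e1).trans (sub_eq_zero.mp e2).symm)
          rw [this]; exact Set.ncard_empty _
        · -- Si = SD : a = b forced
          refine ⟨0, fun a b hab => ?_⟩
          obtain ⟨-, -, hne⟩ := hXL a b hab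
          have : {u : ZMod n | (a - u, b - u) ∈ SD ∧ (u, b) ∈ Sj ∧ (a, u) ∈ Sk} = ∅ := by
            ext u
            simp only [mem_setOf_eq, mem_empty_iff_false, iff_false]
            rintro ⟨h1, -, -⟩
            have e1 : a - u = b - u := h1.1
            exact hne (sub_left_inj.mp e1)
          rw [this]; exact Set.ncard_empty _
        · -- Si = SC : u = b, but (b, b) ∉ J
          refine ⟨0, fun a b hab => ?_⟩
          have : {u : ZMod n | (a - u, b - u) ∈ SC ∧ (u, b) ∈ Sj ∧ (a, u) ∈ Sk} = ∅ := by
            ext u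
            simp only [mem_setOf_eq, mem_empty_iff_false, iff_false]
            rintro ⟨h1, hj, -⟩
            have hu : u = b := (sub_eq_zero.mp h1.1).symm
            subst hu
            exact ((hP.1 _ hJ).1 hj).2.2 rfl
          rw [this]; exact Set.ncard_empty _
        · -- Si = SR : u = a, but (a, a) ∉ K
          refine ⟨0, fun a b hab => ?_⟩
          have : {u : ZMod n | (a - u, b - u) ∈ SR ∧ (u, b) ∈ Sj ∧ (a, u) ∈ Sk} = ∅ := by
            ext u
            simp only [mem_setOf_eq, mem_empty_iff_false, iff_false]
            rintro ⟨h1, -, hk⟩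
            have hu : u = a := (sub_eq_zero.mp h1.1).symm
            subst hu
            exact ((hP.1 _ hK).1 hk).2.2 rfl
          rw [this]; exact Set.ncard_empty _
        · -- all nontrivial : axiom (c)
          obtain ⟨c, hc⟩ := hP.2.2.2.2 Si hI Sj hJ Sk hK Sl hL
          refine ⟨c, fun a b hab => ?_⟩
          have hcc := hc (a, b) hab
          have : {u : ZMod n | (a - u, b - u) ∈ Si ∧ (u, b) ∈ Sj ∧ (a, u) ∈ Sk}
              = {w : ZMod n | w ≠ 0 ∧ w ≠ (a, b).1 ∧ w ≠ (a, b).2 ∧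
                  ((a, b).1 - w, (a, b).2 - w) ∈ Si ∧ (w, (a, b).2) ∈ Sj ∧ ((a, b).1, w) ∈ Sk} := by
            ext u
            simp only [mem_setOf_eq]
            constructor
            · rintro ⟨h1, hj, hk⟩
              obtain ⟨hu0, hub, hune⟩ := (hP.1 _ hJ).1 hj
              obtain ⟨-, -, hane⟩ := (hP.1 _ hK).1 hk
              exact ⟨hu0, fun e => hane e.symm, hune, h1, hj, hk⟩
            · rintro ⟨-, -, -, h1, hj, hk⟩
              exact ⟨h1, hj, hk⟩
          rw [this]
          exact hcc
end key

section perm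
variable {Ω : Type*}

lemma permTriple_one (t : Ω × Ω × Ω) : permTriple 1 t = t := rfl

lemma vec_permTriple (σ : Equiv.Perm (Fin 3)) (t : Ω × Ω × Ω) :
    ![(permTriple σ t).1, (permTriple σ t).2.1, (permTriple σ t).2.2]
      = fun j => ![t.1, t.2.1, t.2.2] (σ j) := by
  funext j
  fin_cases j <;> rfl

lemma permTriple_comp (σ τ : Equiv.Perm (Fin 3)) (t : Ω × Ω × Ω) :
    permTriple τ (permTriple σ t) = permTriple (σ * τ) t := by
  show (_, _, _) = (_, _, _)
  rw [vec_permTriple]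
  rfl

lemma permTriple_swap_inv (x y : Fin 3) (t : Ω × Ω × Ω) :
    permTriple (Equiv.swap x y) (permTriple (Equiv.swap x y) t) = t := by
  rw [permTriple_comp, Equiv.swap_mul_self, permTriple_one]

lemma mem_image_invol {α : Type*} {f : α → α} (hf : ∀ x, f (f x) = x)
    {S : Set α} {t : α} : t ∈ f '' S ↔ f t ∈ S := by
  constructor
  · rintro ⟨s, hs, rfl⟩; rwa [hf]
  · intro h; exact ⟨f t, h, hf t⟩

lemma permTriple_swap01 (t : Ω × Ω × Ω) :
    permTriple (Equiv.swap 0 1) t = (t.2.1, t.1, t.2.2) := by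
  show (![t.1, t.2.1, t.2.2] (Equiv.swap 0 1 0), ![t.1, t.2.1, t.2.2] (Equiv.swap 0 1 1),
    ![t.1, t.2.1, t.2.2] (Equiv.swap 0 1 2)) = _
  rw [show Equiv.swap (0:Fin 3) 1 0 = 1 from by decide,
      show Equiv.swap (0:Fin 3) 1 1 = 0 from by decide,
      show Equiv.swap (0:Fin 3) 1 2 = 2 from by decide]
  rfl

lemma permTriple_swap12 (t : Ω × Ω × Ω) :
    permTriple (Equiv.swap 1 2) t = (t.1, t.2.2, t.2.1) := by
  show (![t.1, t.2.1, t.2.2] (Equiv.swap 1 2 0), ![t.1, t.2.1, t.2.2] (Equiv.swap 1 2 1),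
    ![t.1, t.2.1, t.2.2] (Equiv.swap 1 2 2)) = _
  rw [show Equiv.swap (1:Fin 3) 2 0 = 0 from by decide,
      show Equiv.swap (1:Fin 3) 2 1 = 2 from by decide,
      show Equiv.swap (1:Fin 3) 2 2 = 1 from by decide]
  rfl

lemma permTriple_swap02 (t : Ω × Ω × Ω) :
    permTriple (Equiv.swap 0 2) t = (t.2.2, t.2.1, t.1) := by
  show (![t.1, t.2.1, t.2.2] (Equiv.swap 0 2 0), ![t.1, t.2.1, t.2.2] (Equiv.swap 0 2 1),
    ![t.1, t.2.1, t.2.2] (Equiv.swap 0 2 2)) = _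
  rw [show Equiv.swap (0:Fin 3) 2 0 = 2 from by decide,
      show Equiv.swap (0:Fin 3) 2 1 = 1 from by decide,
      show Equiv.swap (0:Fin 3) 2 2 = 0 from by decide]
  rfl
end perm

section backward
variable {P : Set (Set (ZMod n × ZMod n))} (hP : IsASTRegular P)

lemma codeOf_circulant (S : Set (ZMod n × ZMod n)) : IsCirculant (codeOf S) := by
  intro i j k h
  rw [mem_codeOf] at h ⊢
  convert h using 2 <;> ring

lemma exists_code_of_mem {R : Set (ZMod n × ZMod n × ZMod n)} (hR : R ∈ ASTofPartition P) :
    ∃ S, IsCode P S ∧ R = codeOf S := by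
  rcases hR with h | ⟨I, hI, rfl⟩
  · rcases h with h | h | h | h
    · exact ⟨ST0, Or.inl rfl, h ▸ triv0_eq⟩
    · exact ⟨SD, Or.inr (Or.inl rfl), h ▸ triv1_eq⟩
    · exact ⟨SC, Or.inr (Or.inr (Or.inl rfl)), h ▸ triv2_eq⟩
    · exact ⟨SR, Or.inr (Or.inr (Or.inr (Or.inl rfl))), (mem_singleton_iff.mp h) ▸ triv3_eq⟩
  · exact ⟨I, Or.inr (Or.inr (Or.inr (Or.inr hI))), RI_eq⟩

lemma codeOf_mem_A {S : Set (ZMod n × ZMod n)} (hS : IsCode P S) :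
    codeOf S ∈ ASTofPartition P := by
  rcases hS with rfl | rfl | rfl | rfl | hS
  · exact Or.inl (Or.inl triv0_eq.symm)
  · exact Or.inl (Or.inr (Or.inl triv1_eq.symm))
  · exact Or.inl (Or.inr (Or.inr (Or.inl triv2_eq.symm)))
  · exact Or.inl (Or.inr (Or.inr (Or.inr (mem_singleton_iff.mpr triv3_eq.symm))))
  · exact Or.inr ⟨S, hS, RI_eq⟩

include hP in
lemma unique_rel {R R' : Set (ZMod n × ZMod n × ZMod n)} (hR : R ∈ ASTofPartition P)
    (hR' : R' ∈ ASTofPartition P) {t : ZMod n × ZMod n × ZMod n} (h : t ∈ R) (h' : t ∈ R') :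
    R = R' := by
  obtain ⟨S, hS, rfl⟩ := exists_code_of_mem hR
  obtain ⟨S', hS', rfl⟩ := exists_code_of_mem hR'
  rw [mem_codeOf] at h h'
  rw [code_eq hP hS hS' h h']

include hP in
lemma exists_rel (t : ZMod n × ZMod n × ZMod n) :
    ∃! R, R ∈ ASTofPartition P ∧ t ∈ R := by
  have key : ∃ R, R ∈ ASTofPartition P ∧ t ∈ R := by
    by_cases c1 : t.2.1 - t.1 = 0
    · by_cases c2 : t.2.2 - t.1 = 0
      · exact ⟨triv0 (ZMod n), Or.inl (Or.inl rfl), by rw [triv0_eq, mem_codeOf]; exact ⟨c1, c2⟩⟩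
      · exact ⟨triv3 (ZMod n), Or.inl (Or.inr (Or.inr (Or.inr rfl))),
          by rw [triv3_eq, mem_codeOf]; exact ⟨c1, c2⟩⟩
    · by_cases c2 : t.2.2 - t.1 = 0
      · exact ⟨triv2 (ZMod n), Or.inl (Or.inr (Or.inr (Or.inl rfl))),
          by rw [triv2_eq, mem_codeOf]; exact ⟨c2, c1⟩⟩
      · by_cases c3 : t.2.1 - t.1 = t.2.2 - t.1
        · exact ⟨triv1 (ZMod n), Or.inl (Or.inr (Or.inl rfl)),
            by rw [triv1_eq, mem_codeOf]; exact ⟨c3, c1⟩⟩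
        · obtain ⟨I, ⟨hI, hpI⟩, -⟩ := hP.2.1 (t.2.1 - t.1, t.2.2 - t.1) ⟨c1, c2, c3⟩
          exact ⟨RI I, Or.inr ⟨I, hI, rfl⟩, by rw [RI_eq, mem_codeOf]; exact hpI⟩
  obtain ⟨R, hRA, htR⟩ := key
  exact ⟨R, ⟨hRA, htR⟩, fun R' hR' => unique_rel hP hR'.1 hRA hR'.2 htR⟩

-- images of codeOf under the three swaps
lemma image_s01_codeOf (S : Set (ZMod n × ZMod n)) :
    permTriple (Equiv.swap 0 1) '' codeOf S = codeOf (tauI S) := by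
  ext t
  rw [mem_image_invol (permTriple_swap_inv 0 1), permTriple_swap01, mem_codeOf, mem_codeOf,
    mem_tauI]
  constructor <;> intro h <;> (convert h using 2 <;> ring)

lemma image_s12_codeOf (S : Set (ZMod n × ZMod n)) :
    permTriple (Equiv.swap 1 2) '' codeOf S = codeOf (transI S) := by
  ext t
  rw [mem_image_invol (permTriple_swap_inv 1 2), permTriple_swap12, mem_codeOf, mem_codeOf,
    mem_transI]

lemma image_s02_codeOf (S : Set (ZMod n × ZMod n)) :
    permTriple (Equiv.swap 0 2) '' codeOf S = codeOf (transI (tauI (transI S))) := by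
  ext t
  rw [mem_image_invol (permTriple_swap_inv 0 2), permTriple_swap02, mem_codeOf, mem_codeOf,
    mem_transI, mem_tauI, mem_transI]
  constructor <;> intro h <;> (convert h using 2 <;> ring)

lemma image_one' (R : Set (ZMod n × ZMod n × ZMod n)) :
    permTriple (1 : Equiv.Perm (Fin 3)) '' R = R := by
  have : permTriple (1 : Equiv.Perm (Fin 3)) = (id : ZMod n × ZMod n × ZMod n → _) :=
    funext permTriple_one
  rw [this, image_id]

include hP in
lemma swap_image_mem {R : Set (ZMod n × ZMod n × ZMod n)} (hR : R ∈ ASTofPartition P)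
    (x y : Fin 3) : permTriple (Equiv.swap x y) '' R ∈ ASTofPartition P := by
  obtain ⟨S, hS, rfl⟩ := exists_code_of_mem hR
  have h01 : permTriple (Equiv.swap 0 1) '' codeOf S ∈ ASTofPartition P := by
    rw [image_s01_codeOf]; exact codeOf_mem_A (IsCode.tauI hP hS)
  have h12 : permTriple (Equiv.swap 1 2) '' codeOf S ∈ ASTofPartition P := by
    rw [image_s12_codeOf]; exact codeOf_mem_A (IsCode.transI hP hS)
  have h02 : permTriple (Equiv.swap 0 2) '' codeOf S ∈ ASTofPartition P := by
    rw [image_s02_codeOf]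
    exact codeOf_mem_A (IsCode.transI hP (IsCode.tauI hP (IsCode.transI hP hS)))
  have hid : permTriple (Equiv.swap x x) '' codeOf S ∈ ASTofPartition P := by
    rw [Equiv.swap_self, show (Equiv.refl (Fin 3)) = 1 from rfl, image_one']
    exact hR
  fin_cases x <;> fin_cases y
  · exact hid
  · exact h01
  · exact h02
  · rw [Equiv.swap_comm]; exact h01
  · exact hid
  · exact h12
  · rw [Equiv.swap_comm]; exact h02
  · rw [Equiv.swap_comm]; exact h12
  · exact hid

include hP in
lemma perm_image_mem {R : Set (ZMod n × ZMod n × ZMod n)} (hR : R ∈ ASTofPartition P)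
    (σ : Equiv.Perm (Fin 3)) : permTriple σ '' R ∈ ASTofPartition P := by
  have H : ∀ σ : Equiv.Perm (Fin 3), ∀ R, R ∈ ASTofPartition P →
      permTriple σ '' R ∈ ASTofPartition P := by
    intro σ
    refine Equiv.Perm.swap_induction_on σ ?_ ?_
    · intro R hR; rw [image_one']; exact hR
    · intro f x y hxy IH R hR
      have e2 : permTriple (Equiv.swap x y * f)
          = permTriple f ∘ permTriple (Equiv.swap x y) (Ω := ZMod n) :=
        funext fun t => (permTriple_comp _ _ t).symm
      rw [e2, Set.image_comp]
      exact IH _ (swap_image_mem hP hR x y)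
  exact H σ R hR
end backward

section bw2
variable {P : Set (Set (ZMod n × ZMod n))} (hP : IsASTRegular P)

lemma nontrivial_of_distinct {R : Set (ZMod n × ZMod n × ZMod n)}
    {t : ZMod n × ZMod n × ZMod n} (ht : t ∈ R) (h1 : t.1 ≠ t.2.1) (h2 : t.1 ≠ t.2.2)
    (h3 : t.2.1 ≠ t.2.2) : R ∉ trivials (ZMod n) := by
  rintro (rfl | rfl | rfl | rfl)
  · exact h1 ht.1
  · exact h3 ht.2
  · exact h2 ht.1
  · exact h1 ht.1

include hP in
theorem backward (hn : 3 ≤ n) : IsCirculantAST (ASTofPartition P) := by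
  haveI : NeZero n := ⟨by omega⟩
  haveI : Fact (1 < n) := ⟨by omega⟩
  have h2ne : (2 : ZMod n) ≠ 0 := by
    have : ((2 : ℕ) : ZMod n) ≠ 0 := by
      rw [Ne, ZMod.natCast_eq_zero_iff]
      intro h
      have := Nat.le_of_dvd (by norm_num) h
      omega
    simpa using this
  have h12 : (1 : ZMod n) ≠ 2 := by
    intro h
    exact one_ne_zero (α := ZMod n) (by linear_combination -h)
  have h02 : (0 : ZMod n) ≠ 2 := fun h => h2ne h.symm
  refine ⟨⟨?_, exists_rel hP, fun R hR => Or.inl hR, ?_, ?_, ?_,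
    fun R hR σ => perm_image_mem hP hR σ⟩, ?_⟩
  · -- nonempty
    rintro R ((rfl | rfl | rfl | rfl) | ⟨I, hI, rfl⟩)
    · exact ⟨(0, 0, 0), rfl, rfl⟩
    · exact ⟨(1, 0, 0), one_ne_zero, rfl⟩
    · exact ⟨(0, 1, 0), rfl, zero_ne_one⟩
    · exact ⟨(0, 0, 1), rfl, zero_ne_one⟩
    · obtain ⟨p, hp⟩ := (hP.1 I hI).2
      exact ⟨(0, p.1 + 0, p.2 + 0), 0, p, hp, rfl⟩
  · -- existence of a nontrivial relation
    obtain ⟨I, ⟨hI, hpI⟩, -⟩ := hP.2.1 ((1 : ZMod n), 2) ⟨one_ne_zero, h2ne, h12⟩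
    refine ⟨RI I, Or.inr ⟨I, hI, rfl⟩, ?_⟩
    have ht : ((0 : ZMod n), (1 : ZMod n), (2 : ZMod n)) ∈ RI I := by
      rw [RI_eq, mem_codeOf]
      show ((1 : ZMod n) - 0, (2 : ZMod n) - 0) ∈ I
      rw [sub_zero, sub_zero]
      exact hpI
    exact nontrivial_of_distinct ht (zero_ne_one) h02 h12
  · -- A1
    rintro R (h | ⟨I, hI, rfl⟩) hRnt
    · exact absurd h hRnt
    obtain ⟨c, hc0, hc⟩ := (hP.2.2.1 I hI).2.2
    refine ⟨c, hc0, fun x y hxy => ?_⟩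
    have e : {z : ZMod n | (x, y, z) ∈ RI I}
        = {z : ZMod n | z - x ∈ {j : ZMod n | (y - x, j) ∈ I}} := by
      ext z
      rw [mem_setOf_eq, mem_setOf_eq, mem_setOf_eq, RI_eq, mem_codeOf]
    rw [e, ncard_shift]
    exact (hc (y - x) (sub_ne_zero.mpr (Ne.symm hxy))).1
  · -- A2
    intro Ri hRi Rj hRj Rk hRk Rl hRl
    obtain ⟨Si, hSi, rfl⟩ := exists_code_of_mem hRi
    obtain ⟨Sj, hSj, rfl⟩ := exists_code_of_mem hRj
    obtain ⟨Sk, hSk, rfl⟩ := exists_code_of_mem hRk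
    obtain ⟨Sl, hSl, rfl⟩ := exists_code_of_mem hRl
    obtain ⟨c, hc⟩ := key hP hSi hSj hSk hSl
    refine ⟨c, fun x y z hxyz => ?_⟩
    have hl : (y - x, z - x) ∈ Sl := hxyz
    have e1 : ∀ w : ZMod n, y - x - (w - x) = y - w := fun w => by ring
    have e2 : ∀ w : ZMod n, z - x - (w - x) = z - w := fun w => by ring
    have e : {w : ZMod n | (w, y, z) ∈ codeOf Si ∧ (x, w, z) ∈ codeOf Sj ∧ (x, y, w) ∈ codeOf Sk}
        = {w : ZMod n | w - x ∈ {u : ZMod n | (y - x - u, z - x - u) ∈ Si ∧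
            (u, z - x) ∈ Sj ∧ (y - x, u) ∈ Sk}} := by
      ext w
      simp only [mem_setOf_eq, mem_codeOf, e1, e2]
    rw [e, ncard_shift]
    exact hc (y - x) (z - x) hl
  · -- circulant
    intro R hR
    obtain ⟨S, -, rfl⟩ := exists_code_of_mem hR
    exact codeOf_circulant S
end bw2

section counting
variable {γ : Type*} [Fintype γ] [DecidableEq γ]

lemma ncard_eq_sum_rows (S : Set (γ × γ)) :
    S.ncard = ∑ a : γ, {b : γ | (a, b) ∈ S}.ncard := by
  classical
  have hS : S.Finite := Set.toFinite S
  rw [Set.ncard_eq_toFinset_card _ hS]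
  rw [Finset.card_eq_sum_card_fiberwise (f := Prod.fst) (t := Finset.univ)
    (fun x _ => Finset.mem_univ _)]
  refine Finset.sum_congr rfl fun a _ => ?_
  have hA : {b : γ | (a, b) ∈ S}.Finite := Set.toFinite _
  rw [Set.ncard_eq_toFinset_card _ hA]
  refine Finset.card_bij (fun p _ => p.2) ?_ ?_ ?_
  · intro p hp
    simp only [Finset.mem_filter, Set.Finite.mem_toFinset] at hp
    simp only [Set.Finite.mem_toFinset, mem_setOf_eq]
    have e : ((a : γ), p.2) = p := by
      rw [← hp.2]
    rw [e]
    exact hp.1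
  · intro p hp q hq h
    simp only [Finset.mem_filter, Set.Finite.mem_toFinset] at hp hq
    exact Prod.ext (hp.2.trans hq.2.symm) h
  · intro b hb
    simp only [Set.Finite.mem_toFinset] at hb
    refine ⟨(a, b), ?_, rfl⟩
    simp only [Finset.mem_filter, Set.Finite.mem_toFinset]
    exact ⟨hb, by trivial⟩

lemma ncard_eq_sum_cols (S : Set (γ × γ)) :
    S.ncard = ∑ a : γ, {b : γ | (b, a) ∈ S}.ncard := by
  have h1 : S.ncard = (Prod.swap '' S).ncard :=
    (Set.ncard_image_of_injective _ Prod.swap_injective).symm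
  rw [h1, ncard_eq_sum_rows]
  refine Finset.sum_congr rfl fun a _ => ?_
  congr 1
  ext b
  exact mem_image_invol (fun p => Prod.swap_swap p)
end counting

section fwdaux
lemma row_col_const (hn : 3 ≤ n) {I : Set (ZMod n × ZMod n)} (hIX : I ⊆ Xset n)
    {c c' : ℕ} (hrow : ∀ a : ZMod n, a ≠ 0 → {b : ZMod n | (a, b) ∈ I}.ncard = c)
    (hcol : ∀ a : ZMod n, a ≠ 0 → {b : ZMod n | (b, a) ∈ I}.ncard = c') : c = c' := by
  haveI : NeZero n := ⟨by omega⟩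
  have hrow0 : {b : ZMod n | ((0 : ZMod n), b) ∈ I} = ∅ := by
    ext b
    simp only [mem_setOf_eq, mem_empty_iff_false, iff_false]
    intro h
    exact (hIX h).1 rfl
  have hcol0 : {b : ZMod n | (b, (0 : ZMod n)) ∈ I} = ∅ := by
    ext b
    simp only [mem_setOf_eq, mem_empty_iff_false, iff_false]
    intro h
    exact (hIX h).2.1 rfl
  have key : ∀ (f : ZMod n → Set (ZMod n)) (d : ℕ), (∀ a : ZMod n, a ≠ 0 → (f a).ncard = d) →
      f 0 = ∅ → ∑ a : ZMod n, (f a).ncard = (n - 1) * d := by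
    intro f d hd h0
    rw [← Finset.sum_subset (Finset.subset_univ (Finset.univ.erase (0 : ZMod n)))]
    · rw [Finset.sum_congr rfl (fun a ha => hd a (Finset.ne_of_mem_erase ha)),
        Finset.sum_const, Finset.card_erase_of_mem (Finset.mem_univ _), Finset.card_univ,
        ZMod.card, smul_eq_mul]
    · intro a _ ha
      have : a = 0 := by
        by_contra h
        exact ha (Finset.mem_erase.mpr ⟨h, Finset.mem_univ _⟩)
      subst this
      rw [h0]
      exact Set.ncard_empty _
  have h1 : I.ncard = (n - 1) * c := by
    rw [ncard_eq_sum_rows I]; exact key _ c hrow hrow0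
  have h2 : I.ncard = (n - 1) * c' := by
    rw [ncard_eq_sum_cols I]; exact key _ c' hcol hcol0
  have hpos : 0 < n - 1 := by omega
  exact Nat.eq_of_mul_eq_mul_left hpos (h1.symm.trans h2)

lemma circ_shift {R : Set (ZMod n × ZMod n × ZMod n)} [NeZero n] (hR : IsCirculant R)
    {x y z : ZMod n} (h : (x, y, z) ∈ R) (c : ZMod n) : (x + c, y + c, z + c) ∈ R := by
  have hnat : ∀ m : ℕ, (x + (m : ZMod n), y + (m : ZMod n), z + (m : ZMod n)) ∈ R := by
    intro m
    induction m with
    | zero => simpa using h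
    | succ k ih =>
        have h2 := hR _ _ _ ih
        convert h2 using 2 <;> push_cast <;> ring
  have := hnat c.val
  rwa [ZMod.natCast_val, ZMod.cast_id] at this

lemma mem_iff_zero_shift {R : Set (ZMod n × ZMod n × ZMod n)} [NeZero n] (hR : IsCirculant R)
    {x y z : ZMod n} : (x, y, z) ∈ R ↔ ((0 : ZMod n), y - x, z - x) ∈ R := by
  constructor
  · intro h
    have := circ_shift hR h (-x)
    convert this using 2 <;> ring
  · intro h
    have := circ_shift hR h x
    convert this using 2 <;> ring
end fwdaux

section forward
variable {A : Set (Set (ZMod n × ZMod n × ZMod n))}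

/-- the induced partition of `X` from a circulant AST -/
def IofR (R : Set (ZMod n × ZMod n × ZMod n)) : Set (ZMod n × ZMod n) :=
  {p | ((0 : ZMod n), p.1, p.2) ∈ R}

theorem forward (hn : 3 ≤ n) (hA : IsCirculantAST A) :
    ∃ P : Set (Set (ZMod n × ZMod n)), IsASTRegular P ∧ A = ASTofPartition P := by
  haveI : NeZero n := ⟨by omega⟩
  obtain ⟨⟨hne, hpart, htriv, hex, hA1, hA2, hA3⟩, hcirc⟩ := hA
  set P : Set (Set (ZMod n × ZMod n)) := IofR '' {R | R ∈ A ∧ R ∉ trivials (ZMod n)} with hPdef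
  -- distinctness of entries for nontrivial relations
  have hdist : ∀ R ∈ A, R ∉ trivials (ZMod n) → ∀ t ∈ R,
      t.1 ≠ t.2.1 ∧ t.1 ≠ t.2.2 ∧ t.2.1 ≠ t.2.2 := by
    intro R hR hnt t ht
    have uniq : ∀ T ∈ A, t ∈ T → R = T := fun T hT htT =>
      (hpart t).unique ⟨hR, ht⟩ ⟨hT, htT⟩
    refine ⟨?_, ?_, ?_⟩
    · intro e1
      by_cases e2 : t.2.1 = t.2.2
      · exact hnt (by rw [uniq (triv0 _) (htriv (Or.inl rfl)) ⟨e1, e2⟩]; exact Or.inl rfl)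
      · exact hnt (by rw [uniq (triv3 _) (htriv (Or.inr (Or.inr (Or.inr rfl)))) ⟨e1, e2⟩]
                      exact Or.inr (Or.inr (Or.inr rfl)))
    · intro e
      by_cases e1 : t.1 = t.2.1
      · have e2 : t.2.1 = t.2.2 := e1.symm.trans e
        exact hnt (by rw [uniq (triv0 _) (htriv (Or.inl rfl)) ⟨e1, e2⟩]; exact Or.inl rfl)
      · exact hnt (by rw [uniq (triv2 _) (htriv (Or.inr (Or.inr (Or.inl rfl)))) ⟨e, e1⟩]
                      exact Or.inr (Or.inr (Or.inl rfl)))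
    · intro e
      by_cases e1 : t.1 = t.2.1
      · exact hnt (by rw [uniq (triv0 _) (htriv (Or.inl rfl)) ⟨e1, e⟩]; exact Or.inl rfl)
      · exact hnt (by rw [uniq (triv1 _) (htriv (Or.inr (Or.inl rfl))) ⟨e1, e⟩]
                      exact Or.inr (Or.inl rfl))
  -- representation R = RI (IofR R)
  have hrep : ∀ R ∈ A, R = RI (IofR R) := by
    intro R hR
    ext t
    rw [RI_eq, mem_codeOf]
    exact mem_iff_zero_shift (hcirc R hR) (x := t.1) (y := t.2.1) (z := t.2.2)
  -- nontrivial images under coordinate swaps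
  have himg : ∀ R ∈ A, R ∉ trivials (ZMod n) → ∀ σ : Equiv.Perm (Fin 3),
      permTriple σ '' R ∈ A ∧ permTriple σ '' R ∉ trivials (ZMod n) := by
    intro R hR hnt σ
    refine ⟨hA3 R hR σ, ?_⟩
    obtain ⟨t, ht⟩ := hne R hR
    obtain ⟨d1, d2, d3⟩ := hdist R hR hnt t ht
    have hmem : permTriple σ t ∈ permTriple σ '' R := ⟨t, ht, rfl⟩
    have hd : (permTriple σ t).1 ≠ (permTriple σ t).2.1 ∧
        (permTriple σ t).1 ≠ (permTriple σ t).2.2 ∧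
        (permTriple σ t).2.1 ≠ (permTriple σ t).2.2 := by
      show ![t.1, t.2.1, t.2.2] (σ 0) ≠ ![t.1, t.2.1, t.2.2] (σ 1) ∧
        ![t.1, t.2.1, t.2.2] (σ 0) ≠ ![t.1, t.2.1, t.2.2] (σ 2) ∧
        ![t.1, t.2.1, t.2.2] (σ 1) ≠ ![t.1, t.2.1, t.2.2] (σ 2)
      have hv : ∀ i j : Fin 3, i ≠ j →
          ![t.1, t.2.1, t.2.2] i ≠ ![t.1, t.2.1, t.2.2] j := by
        intro i j hij
        fin_cases i <;> fin_cases j <;>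
          first
            | exact absurd rfl hij
            | exact d1
            | exact d2
            | exact d3
            | exact d1.symm
            | exact d2.symm
            | exact d3.symm
      exact ⟨hv _ _ (fun e => by simpa using σ.injective e),
        hv _ _ (fun e => by simpa using σ.injective e),
        hv _ _ (fun e => by simpa using σ.injective e)⟩
    exact nontrivial_of_distinct hmem hd.1 hd.2.1 hd.2.2
  -- the members of P are subsets of X and nonempty
  have hPX : ∀ I ∈ P, I ⊆ Xset n ∧ I.Nonempty := by
    rintro I ⟨R, ⟨hR, hnt⟩, rfl⟩
    constructor
    · intro p hp
      obtain ⟨d1, d2, d3⟩ := hdist R hR hnt _ hp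
      exact ⟨Ne.symm d1, Ne.symm d2, d3⟩
    · obtain ⟨t, ht⟩ := hne R hR
      have := (mem_iff_zero_shift (hcirc R hR) (x := t.1) (y := t.2.1) (z := t.2.2)).mp ht
      exact ⟨(t.2.1 - t.1, t.2.2 - t.1), this⟩
  -- partition property of P on X
  have hPpart : ∀ p ∈ Xset n, ∃! I, I ∈ P ∧ p ∈ I := by
    rintro p ⟨hp1, hp2, hp3⟩
    obtain ⟨R, ⟨hR, htR⟩, -⟩ := hpart ((0 : ZMod n), p.1, p.2)
    have hnt : R ∉ trivials (ZMod n) :=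
      nontrivial_of_distinct htR (Ne.symm hp1) (Ne.symm hp2) hp3
    refine ⟨IofR R, ⟨⟨R, ⟨hR, hnt⟩, rfl⟩, htR⟩, ?_⟩
    rintro I' ⟨⟨R', ⟨hR', hnt'⟩, rfl⟩, hpI'⟩
    have : R' = R := (hpart ((0 : ZMod n), p.1, p.2)).unique ⟨hR', hpI'⟩ ⟨hR, htR⟩
    rw [this]
  refine ⟨P, ⟨hPX, hPpart, ?_, ?_, ?_⟩, ?_⟩
  · -- (a) regularity
    rintro I ⟨R, ⟨hR, hnt⟩, rfl⟩
    obtain ⟨c, hc0, hc⟩ := hA1 R hR hnt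
    obtain ⟨hR', hnt'⟩ := himg R hR hnt (Equiv.swap 1 2)
    obtain ⟨c', hc0', hc'⟩ := hA1 _ hR' hnt'
    have hrow : ∀ x : ZMod n, x ≠ 0 → {j : ZMod n | (x, j) ∈ IofR R}.ncard = c := by
      intro x hx
      exact hc 0 x (Ne.symm hx)
    have hcolset : ∀ x : ZMod n, {i : ZMod n | (i, x) ∈ IofR R}
        = {z : ZMod n | ((0 : ZMod n), x, z) ∈ permTriple (Equiv.swap 1 2) '' R} := by
      intro x
      ext i
      have h := mem_image_invol (permTriple_swap_inv 1 2) (S := R)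
        (t := ((0 : ZMod n), x, i))
      rw [permTriple_swap12] at h
      exact h.symm
    have hcol : ∀ x : ZMod n, x ≠ 0 → {i : ZMod n | (i, x) ∈ IofR R}.ncard = c' := by
      intro x hx
      rw [hcolset x]
      exact hc' 0 x (Ne.symm hx)
    have hcc : c = c' :=
      row_col_const hn (hPX _ ⟨R, ⟨hR, hnt⟩, rfl⟩).1 hrow hcol
    have hreg : ∀ x : ZMod n, x ≠ 0 → {j : ZMod n | (x, j) ∈ IofR R}.ncard = c ∧
        {i : ZMod n | (i, x) ∈ IofR R}.ncard = c := fun x hx =>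
      ⟨hrow x hx, by rw [hcol x hx, hcc]⟩
    refine ⟨?_, ?_, c, hc0, hreg⟩
    · apply Set.Subset.antisymm
      · rintro x ⟨p, hp, rfl⟩
        exact ((hPX _ ⟨R, ⟨hR, hnt⟩, rfl⟩).1 hp).1
      · intro x hx
        have := (hreg x hx).1
        have hne' : {j : ZMod n | (x, j) ∈ IofR R}.Nonempty := by
          rw [← Set.ncard_pos (Set.toFinite _)] at *
          omega
        obtain ⟨j, hj⟩ := hne'
        exact ⟨(x, j), hj, rfl⟩
    · apply Set.Subset.antisymm
      · rintro x ⟨p, hp, rfl⟩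
        exact ((hPX _ ⟨R, ⟨hR, hnt⟩, rfl⟩).1 hp).2.1
      · intro x hx
        have := (hreg x hx).2
        have hne' : {i : ZMod n | (i, x) ∈ IofR R}.Nonempty := by
          rw [← Set.ncard_pos (Set.toFinite _)] at *
          omega
        obtain ⟨i, hi⟩ := hne'
        exact ⟨(i, x), hi, rfl⟩
  · -- (b) closure under T and τ
    rintro I ⟨R, ⟨hR, hnt⟩, rfl⟩
    constructor
    · obtain ⟨hR', hnt'⟩ := himg R hR hnt (Equiv.swap 1 2)
      refine ⟨permTriple (Equiv.swap 1 2) '' R, ⟨hR', hnt'⟩, ?_⟩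
      ext p
      rw [mem_transI]
      have h := mem_image_invol (permTriple_swap_inv 1 2) (S := R)
        (t := ((0 : ZMod n), p.1, p.2))
      rw [permTriple_swap12] at h
      exact h
    · obtain ⟨hR', hnt'⟩ := himg R hR hnt (Equiv.swap 0 1)
      refine ⟨permTriple (Equiv.swap 0 1) '' R, ⟨hR', hnt'⟩, ?_⟩
      ext p
      rw [mem_tauI]
      have h := mem_image_invol (permTriple_swap_inv 0 1) (S := R)
        (t := ((0 : ZMod n), p.1, p.2))
      rw [permTriple_swap01] at h
      rw [mem_iff_zero_shift (hcirc R hR), zero_sub] at h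
      exact h
  · -- (c) intersection numbers
    rintro I ⟨Ri, ⟨hRi, hnti⟩, rfl⟩ J ⟨Rj, ⟨hRj, hntj⟩, rfl⟩ K ⟨Rk, ⟨hRk, hntk⟩, rfl⟩
      L ⟨Rl, ⟨hRl, hntl⟩, rfl⟩
    obtain ⟨c, hc⟩ := hA2 Ri hRi Rj hRj Rk hRk Rl hRl
    refine ⟨c, fun q hq => ?_⟩
    have hql : ((0 : ZMod n), q.1, q.2) ∈ Rl := hq
    have e : {w : ZMod n | w ≠ 0 ∧ w ≠ q.1 ∧ w ≠ q.2 ∧ (q.1 - w, q.2 - w) ∈ IofR Ri ∧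
        (w, q.2) ∈ IofR Rj ∧ (q.1, w) ∈ IofR Rk}
        = {w : ZMod n | (w, q.1, q.2) ∈ Ri ∧ ((0 : ZMod n), w, q.2) ∈ Rj ∧
            ((0 : ZMod n), q.1, w) ∈ Rk} := by
      ext w
      simp only [mem_setOf_eq]
      constructor
      · rintro ⟨-, -, -, h1, h2, h3⟩
        exact ⟨(mem_iff_zero_shift (hcirc Ri hRi)).mpr h1, h2, h3⟩
      · rintro ⟨h1, h2, h3⟩
        have hX2 := hdist Rj hRj hntj _ h2
        have hX3 := hdist Rk hRk hntk _ h3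
        have h0w : (0 : ZMod n) ≠ w := hX2.1
        have hwq2 : w ≠ q.2 := hX2.2.2
        have hq1w : q.1 ≠ w := hX3.2.2
        refine ⟨Ne.symm h0w, Ne.symm hq1w, hwq2, ?_, h2, h3⟩
        exact (mem_iff_zero_shift (hcirc Ri hRi)).mp h1
    rw [e]
    exact hc 0 q.1 q.2 hql
  · -- A = ASTofPartition P
    apply Set.Subset.antisymm
    · intro R hR
      by_cases hnt : R ∈ trivials (ZMod n)
      · exact Or.inl hnt
      · exact Or.inr ⟨IofR R, ⟨R, ⟨hR, hnt⟩, rfl⟩, (hrep R hR).symm⟩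
    · rintro R (h | ⟨I, ⟨R', ⟨hR', hnt'⟩, rfl⟩, rfl⟩)
      · exact htriv h
      · rw [← hrep R' hR']
        exact hR'
end forward

/-- A partition `𝓐` of `Ω³` (with `Ω = ZMod n`, `n ≥ 3`) is a circulant
AST if and only if `𝓐 = 𝓐(𝓘)` for some AST-regular partition `𝓘` of `X`. -/
theorem circulantAST_iff_ASTRegular (n : ℕ) (hn : 3 ≤ n)
    (A : Set (Set (ZMod n × ZMod n × ZMod n))) :
    IsCirculantAST A ↔
      ∃ P : Set (Set (ZMod n × ZMod n)), IsASTRegular P ∧ A = ASTofPartition P := by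
  constructor
  · exact fun h => forward hn h
  · rintro ⟨P, hP, rfl⟩
    exact backward hP hn

end CirculantAST
end

section
/- Let 𝓐 = {R₀,…,R_m} be an AST on a finite set Ω with |Ω| ≥ 3. Then for each i ∈ {4,…,m} there exist constants n_i^{(1)} and n_i^{(2)} such that for every pair x, y ∈ Ω with x ≠ y, the number of elements z ∈ Ω with (z,x,y) ∈ R_i equals n_i^{(1)}, and the number of elements z ∈ Ω with (x,z,y) ∈ R_i equals n_i^{(2)}. -/
open Set

namespace CirculantAST

variable {n : ℕ}

lemma mem_eq_of_trivial {Ω : Type*} {A : Set (Set (Ω × Ω × Ω))} (hA : IsAST Ω A)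
    {R T : Set (Ω × Ω × Ω)} (hR : R ∈ A) (hT : T ∈ trivials Ω) {t : Ω × Ω × Ω}
    (htR : t ∈ R) (htT : t ∈ T) : R = T := by
  obtain ⟨S, _, hu⟩ := hA.2.1 t
  exact (hu R ⟨hR, htR⟩).trans (hu T ⟨hA.2.2.1 hT, htT⟩).symm

lemma distinct_of_nontrivial {Ω : Type*} {A : Set (Set (Ω × Ω × Ω))} (hA : IsAST Ω A)
    {R : Set (Ω × Ω × Ω)} (hR : R ∈ A) (hRnt : R ∉ trivials Ω) {t : Ω × Ω × Ω}
    (ht : t ∈ R) : t.1 ≠ t.2.1 ∧ t.1 ≠ t.2.2 ∧ t.2.1 ≠ t.2.2 := by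
  have h0 : ¬ (t.1 = t.2.1 ∧ t.2.1 = t.2.2) := fun h =>
    hRnt ((mem_eq_of_trivial hA hR (show triv0 Ω ∈ trivials Ω by simp [trivials]) ht h) ▸
      (show triv0 Ω ∈ trivials Ω by simp [trivials]))
  have h1 : ¬ (t.1 ≠ t.2.1 ∧ t.2.1 = t.2.2) := fun h =>
    hRnt ((mem_eq_of_trivial hA hR (show triv1 Ω ∈ trivials Ω by simp [trivials]) ht h) ▸
      (show triv1 Ω ∈ trivials Ω by simp [trivials]))
  have h2 : ¬ (t.1 = t.2.2 ∧ t.1 ≠ t.2.1) := fun h =>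
    hRnt ((mem_eq_of_trivial hA hR (show triv2 Ω ∈ trivials Ω by simp [trivials]) ht h) ▸
      (show triv2 Ω ∈ trivials Ω by simp [trivials]))
  have h3 : ¬ (t.1 = t.2.1 ∧ t.2.1 ≠ t.2.2) := fun h =>
    hRnt ((mem_eq_of_trivial hA hR (show triv3 Ω ∈ trivials Ω by simp [trivials]) ht h) ▸
      (show triv3 Ω ∈ trivials Ω by simp [trivials]))
  tauto

lemma image_nontrivial {Ω : Type*} {A : Set (Set (Ω × Ω × Ω))} (hA : IsAST Ω A)
    {R : Set (Ω × Ω × Ω)} (hR : R ∈ A) (hRnt : R ∉ trivials Ω) (σ : Equiv.Perm (Fin 3)) :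
    permTriple σ '' R ∉ trivials Ω := by
  intro hT
  obtain ⟨t, ht⟩ := hA.1 R hR
  obtain ⟨d1, d2, d3⟩ := distinct_of_nontrivial hA hR hRnt ht
  have hv : Function.Injective ![t.1, t.2.1, t.2.2] := by
    intro a b h
    fin_cases a <;> fin_cases b <;> simp_all
  have key : ∀ i j : Fin 3, i ≠ j →
      ![t.1, t.2.1, t.2.2] (σ i) ≠ ![t.1, t.2.1, t.2.2] (σ j) :=
    fun i j hij h => hij (σ.injective (hv h))
  have hmem : permTriple σ t ∈ permTriple σ '' R := ⟨t, ht, rfl⟩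
  rcases hT with h | h | h | h <;> rw [h] at hmem
  · exact key 0 1 (by decide) hmem.1
  · exact key 1 2 (by decide) hmem.2
  · exact key 0 2 (by decide) hmem.1
  · exact key 0 1 (by decide) hmem.1

/-- In an AST on a finite set `Ω` with `|Ω| ≥ 3`, each nontrivial
relation `R_i` has constants `n_i^{(1)}`, `n_i^{(2)}` counting the `z` with
`(z,x,y) ∈ R_i`, resp. `(x,z,y) ∈ R_i`, for any pair `x ≠ y`. -/
theorem AST_exists_n1_n2 (Ω : Type*) [Fintype Ω] (hΩ : 3 ≤ Fintype.card Ω)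
    (A : Set (Set (Ω × Ω × Ω))) (hA : IsAST Ω A) :
    ∀ R ∈ A, R ∉ trivials Ω →
      ∃ c₁ c₂ : ℕ, ∀ x y : Ω, x ≠ y →
        {z : Ω | (z, x, y) ∈ R}.ncard = c₁ ∧ {z : Ω | (x, z, y) ∈ R}.ncard = c₂ := by
  intro R hR hRnt
  obtain ⟨hne, huniq, htriv, hm, hA1, hA2, hA3⟩ := hA
  set σ1 : Equiv.Perm (Fin 3) := finRotate 3 with hσ1
  set σ2 : Equiv.Perm (Fin 3) := Equiv.swap 1 2 with hσ2
  have hR1 : permTriple σ1 '' R ∈ A := hA3 R hR σ1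
  have hR2 : permTriple σ2 '' R ∈ A := hA3 R hR σ2
  obtain ⟨c₁, _, hc₁⟩ := hA1 _ hR1 (image_nontrivial ⟨hne, huniq, htriv, hm, hA1, hA2, hA3⟩ hR hRnt σ1)
  obtain ⟨c₂, _, hc₂⟩ := hA1 _ hR2 (image_nontrivial ⟨hne, huniq, htriv, hm, hA1, hA2, hA3⟩ hR hRnt σ2)
  refine ⟨c₁, c₂, fun x y hxy => ⟨?_, ?_⟩⟩
  · rw [← hc₁ x y hxy]
    congr 1
    ext z
    constructor
    · intro hz
      exact ⟨(z, x, y), hz, rfl⟩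
    · rintro ⟨t, htR, heq⟩
      have hpt : permTriple σ1 t = (t.2.1, t.2.2, t.1) := rfl
      rw [hpt] at heq
      obtain ⟨a, b, c⟩ := t
      simp only [Prod.mk.injEq] at heq
      obtain ⟨h1, h2, h3⟩ := heq
      subst h1; subst h2; subst h3
      exact htR
  · rw [← hc₂ x y hxy]
    congr 1
    ext z
    constructor
    · intro hz
      exact ⟨(x, z, y), hz, rfl⟩
    · rintro ⟨t, htR, heq⟩
      have hpt : permTriple σ2 t = (t.1, t.2.2, t.2.1) := rfl
      rw [hpt] at heq
      obtain ⟨a, b, c⟩ := t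
      simp only [Prod.mk.injEq] at heq
      obtain ⟨h1, h2, h3⟩ := heq
      subst h1; subst h2; subst h3
      exact htR


end CirculantAST
end

section
/- Let n ≥ 3 and Ω = ZMod n. Suppose I ⊆ X is such that both I and I^τ = {(-i, j-i) : (i,j) ∈ I} satisfy the regularity condition with parameter 1: both coordinate projections equal Ω∖{0}, and for each x ∈ Ω∖{0} there is exactly one j with (x,j) in the set and exactly one i with (i,x) in the set. Then the 3-circulant R_I is ab-thin for all three pairs ab ∈ {12, 13, 23}. -/
open Set

namespace CirculantAST

variable {n : ℕ}

/-- If `I ⊆ X` and both `I` and `I^τ` satisfy the regularity condition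
with parameter `1`, then `R_I` is `ab`-thin for all three pairs `ab ∈ {12,13,23}`. -/
theorem RI_thin_of_regOne (n : ℕ) (hn : 3 ≤ n)
    (I : Set (ZMod n × ZMod n)) (hIX : I ⊆ Xset n)
    (hI : RegPar I 1) (hIτ : RegPar (tauI I) 1) :
    ThinVia (RI I) sgm12 ∧ ThinVia (RI I) sgm13 ∧ ThinVia (RI I) sgm23 := by
  obtain ⟨-, -, hreg⟩ := hI
  obtain ⟨-, -, hregτ⟩ := hIτ
  have h1 : ∀ x : ZMod n, x ≠ 0 → ∃! j, (x, j) ∈ I := by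
    intro x hx
    obtain ⟨a, ha⟩ := Set.ncard_eq_one.mp (hreg x hx).1
    obtain ⟨ha1, ha2⟩ := Set.eq_singleton_iff_unique_mem.mp ha
    exact ⟨a, ha1, ha2⟩
  have h2 : ∀ x : ZMod n, x ≠ 0 → ∃! i, (i, x) ∈ I := by
    intro x hx
    obtain ⟨a, ha⟩ := Set.ncard_eq_one.mp (hreg x hx).2
    obtain ⟨ha1, ha2⟩ := Set.eq_singleton_iff_unique_mem.mp ha
    exact ⟨a, ha1, ha2⟩
  have h3 : ∀ d : ZMod n, d ≠ 0 → ∃! i, (i, i + d) ∈ I := by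
    intro d hd
    obtain ⟨a, ha⟩ := Set.ncard_eq_one.mp ((hregτ d hd).2)
    obtain ⟨ha1, ha2⟩ := Set.eq_singleton_iff_unique_mem.mp ha
    obtain ⟨p, hp, hpe⟩ := ha1
    rw [Prod.ext_iff] at hpe
    obtain ⟨e1, e2⟩ := hpe
    refine ⟨-a, ?_, ?_⟩
    · have hp1 : p.1 = -a := by linear_combination -e1
      have hp2 : p.2 = -a + d := by linear_combination e2 - e1
      have : ((-a : ZMod n), -a + d) = p := Prod.ext hp1.symm hp2.symm
      show ((-a : ZMod n), -a + d) ∈ I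
      rw [this]; exact hp
    · intro i hi
      have : (-i : ZMod n) = a :=
        ha2 (-i) ⟨(i, i + d), hi, by rw [Prod.mk.injEq]; exact ⟨rfl, by ring⟩⟩
      linear_combination -this
  refine ⟨⟨?_, ?_⟩, ⟨?_, ?_⟩, ⟨?_, ?_⟩⟩
  · -- InjOn sgm12
    rintro t ⟨x, p, hp, rfl⟩ t' ⟨y, q, hq, rfl⟩ h
    simp only [sgm12, Prod.mk.injEq] at h
    obtain ⟨rfl, h2'⟩ := h
    have hp1 : p.1 = q.1 := by linear_combination h2'
    have hj : p.2 = q.2 := by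
      refine (h1 p.1 (hIX hp).1).unique hp ?_
      rw [hp1]; exact hq
    rw [hp1, hj]
  · -- image sgm12
    ext ⟨u, v⟩
    simp only [Set.mem_image, Set.mem_setOf_eq]
    constructor
    · rintro ⟨t, ⟨x, p, hp, rfl⟩, ht⟩
      simp only [sgm12, Prod.mk.injEq] at ht
      obtain ⟨rfl, rfl⟩ := ht
      intro h
      exact (hIX hp).1 (by linear_combination -h)
    · intro huv
      obtain ⟨j, hj, -⟩ := h1 (v - u) (sub_ne_zero.mpr (Ne.symm huv))
      exact ⟨(u, v - u + u, j + u), ⟨u, (v - u, j), hj, rfl⟩,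
        by simp only [sgm12, Prod.mk.injEq]; exact ⟨trivial, by ring⟩⟩
  · -- InjOn sgm13
    rintro t ⟨x, p, hp, rfl⟩ t' ⟨y, q, hq, rfl⟩ h
    simp only [sgm13, Prod.mk.injEq] at h
    obtain ⟨rfl, h2'⟩ := h
    have hp2 : p.2 = q.2 := by linear_combination h2'
    have hi : p.1 = q.1 := by
      refine (h2 p.2 (hIX hp).2.1).unique hp ?_
      rw [hp2]; exact hq
    rw [hp2, hi]
  · -- image sgm13
    ext ⟨u, v⟩
    simp only [Set.mem_image, Set.mem_setOf_eq]
    constructor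
    · rintro ⟨t, ⟨x, p, hp, rfl⟩, ht⟩
      simp only [sgm13, Prod.mk.injEq] at ht
      obtain ⟨rfl, rfl⟩ := ht
      intro h
      exact (hIX hp).2.1 (by linear_combination -h)
    · intro huv
      obtain ⟨i, hi, -⟩ := h2 (v - u) (sub_ne_zero.mpr (Ne.symm huv))
      exact ⟨(u, i + u, v - u + u), ⟨u, (i, v - u), hi, rfl⟩,
        by simp only [sgm13, Prod.mk.injEq]; exact ⟨trivial, by ring⟩⟩
  · -- InjOn sgm23
    rintro t ⟨x, p, hp, rfl⟩ t' ⟨y, q, hq, rfl⟩ h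
    simp only [sgm23, Prod.mk.injEq] at h
    obtain ⟨e1, e2⟩ := h
    have hd : p.2 - p.1 ≠ 0 := sub_ne_zero.mpr (Ne.symm (hIX hp).2.2)
    have hpI : (p.1, p.1 + (p.2 - p.1)) ∈ I := by
      have : (p.1, p.1 + (p.2 - p.1)) = p := by rw [Prod.ext_iff]; exact ⟨rfl, by ring⟩
      rw [this]; exact hp
    have hqI : (q.1, q.1 + (p.2 - p.1)) ∈ I := by
      have : (q.1, q.1 + (p.2 - p.1)) = q := by
        rw [Prod.ext_iff]; exact ⟨rfl, by linear_combination e2 - e1⟩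
      rw [this]; exact hq
    have hpq1 : p.1 = q.1 := (h3 _ hd).unique hpI hqI
    have hpq2 : p.2 = q.2 := by linear_combination e2 - e1 + hpq1
    have hxy : x = y := by linear_combination e1 - hpq1
    rw [hpq1, hpq2, hxy]
  · -- image sgm23
    ext ⟨u, v⟩
    simp only [Set.mem_image, Set.mem_setOf_eq]
    constructor
    · rintro ⟨t, ⟨x, p, hp, rfl⟩, ht⟩
      simp only [sgm23, Prod.mk.injEq] at ht
      obtain ⟨rfl, rfl⟩ := ht
      intro h
      exact (hIX hp).2.2 (by linear_combination h)
    · intro huv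
      obtain ⟨i, hi, -⟩ := h3 (v - u) (sub_ne_zero.mpr (Ne.symm huv))
      exact ⟨(u - i, i + (u - i), i + (v - u) + (u - i)),
        ⟨u - i, (i, i + (v - u)), hi, rfl⟩,
        by simp only [sgm23, Prod.mk.injEq]; exact ⟨by ring, by ring⟩⟩

end CirculantAST
end

section
/- Let n ≥ 3, Ω = ZMod n, and let I ⊆ X be such that both coordinate projections of I equal Ω∖{0} and there is a positive integer n_I such that for each x ∈ Ω∖{0} there are exactly n_I elements j with (x,j) ∈ I and exactly n_I elements i with (i,x) ∈ I. Then R_I is a disjoint union of n_I nontrivial 3-circulants, each of which is both 12-thin and 13-thin. -/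
open Set

/-!
Since `I ⊆ X` has `n_I` entries in every row and every column indexed by `Ω ∖ {0}`, it is the
edge set of an `n_I`-regular bipartite graph, so by Hall's theorem it splits into `n_I` disjoint
graphs of permutations `σ` of `Ω ∖ {0}` (König). For the graph of `σ`, a pair `(x, y)` with
`x ≠ y` is the `12`-projection of exactly one triple of `R_{graph σ}`, namely `(x, y, σ (y - x) + x)`.
Transposing the graph replaces `σ` by `σ⁻¹` and swaps the last two coordinates of the triples, which
turns `12`-thinness into `13`-thinness.
-/

section RegularBipartite

open Finset

variable {α : Type*} [Finite α]

theorem exists_perm_forall_rel_of_regular {r : α → α → Prop} {c : ℕ} (hc : 0 < c)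
    (hrow : ∀ a, {b | r a b}.ncard = c) (hcol : ∀ b, {a | r a b}.ncard = c) :
    ∃ σ : Equiv.Perm α, ∀ a, r a (σ a) := by
  classical
  have := Fintype.ofFinite α
  -- Hall's condition by double counting the edges leaving `A`: `#A * c ≤ #N(A) * c`.
  have hall (A : Finset α) : #A ≤ #{b | ∃ a ∈ A, r a b} := by
    refine Nat.le_of_mul_le_mul_right (card_mul_le_card_mul r (fun a ha => ?_) fun b _ => ?_) hc
    · rw [← hrow a, ← Set.ncard_coe_finset]
      refine Set.ncard_le_ncard fun b hb => ?_
      simp only [bipartiteAbove, coe_filter, mem_filter]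
      exact ⟨⟨mem_univ b, a, ha, hb⟩, hb⟩
    · rw [← hcol b, ← Set.ncard_coe_finset]
      refine Set.ncard_le_ncard fun a ha => ?_
      simp only [bipartiteBelow, coe_filter] at ha
      exact ha.2
  obtain ⟨f, hf, hrf⟩ := (Fintype.all_card_le_filter_rel_iff_exists_injective r).mp hall
  exact ⟨Equiv.ofBijective f hf.bijective_of_finite, hrf⟩

theorem exists_perm_decomposition_of_regular (r : α → α → Prop) (c : ℕ)
    (hrow : ∀ a, {b | r a b}.ncard = c) (hcol : ∀ b, {a | r a b}.ncard = c) :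
    ∃ σ : Fin c → Equiv.Perm α,
      (Pairwise fun k l => ∀ a, σ k a ≠ σ l a) ∧ ∀ a b, r a b ↔ ∃ k, σ k a = b := by
  induction c generalizing r with
  | zero =>
    refine ⟨finZeroElim, fun k => k.elim0, fun a b => ?_⟩
    have hempty : {b | r a b} = ∅ := (Set.ncard_eq_zero (Set.toFinite _)).mp (hrow a)
    simpa using Set.eq_empty_iff_forall_notMem.mp hempty b
  | succ c ih =>
    obtain ⟨σ, hσ⟩ := exists_perm_forall_rel_of_regular c.succ_pos hrow hcol
    have hrow' (a : α) : {b | r a b ∧ σ a ≠ b}.ncard = c := by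
      have : {b | r a b ∧ σ a ≠ b} = {b | r a b} \ {σ a} := by ext; simp [eq_comm]
      rw [this, Set.ncard_sdiff_singleton_of_mem (s := {b | r a b}) (hσ a), hrow a,
        Nat.add_sub_cancel]
    have hcol' (b : α) : {a | r a b ∧ σ a ≠ b}.ncard = c := by
      have : {a | r a b ∧ σ a ≠ b} = {a | r a b} \ {σ.symm b} := by
        ext; simp [Equiv.eq_symm_apply]
      rw [this, Set.ncard_sdiff_singleton_of_mem (s := {a | r a b})
        (by simpa using hσ (σ.symm b)), hcol b, Nat.add_sub_cancel]
    obtain ⟨τ, hτ, hrτ⟩ := ih _ hrow' hcol'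
    refine ⟨Fin.cons σ τ, pairwise_fin_succ_iff.mpr ⟨?_, ?_, hτ⟩, ?_⟩
    · exact fun k a h => ((hrτ a _).mpr ⟨k, rfl⟩).2 h.symm
    · exact fun k a h => ((hrτ a _).mpr ⟨k, rfl⟩).2 h
    · intro a b
      rw [Fin.exists_fin_succ]
      simp only [Fin.cons_zero, Fin.cons_succ, ← hrτ]
      constructor
      · intro hab
        exact or_iff_not_imp_left.mpr fun h => ⟨hab, h⟩
      · rintro (rfl | ⟨hab, -⟩)
        exacts [hσ a, hab]

end RegularBipartite

namespace CirculantAST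

variable {n : ℕ}

theorem ThinVia.image {Ω : Type*} {R : Set (Ω × Ω × Ω)} {f : Ω × Ω × Ω → Ω × Ω}
    {g : Ω × Ω × Ω → Ω × Ω × Ω} (h : ThinVia R (f ∘ g)) : ThinVia (g '' R) f :=
  ⟨h.1.image_of_comp, by rw [image_image]; exact h.2⟩

section PermGraph

variable {Ω : Type*} {s : Set Ω}

def permGraph (σ : Equiv.Perm s) : Set (Ω × Ω) := range fun x : s => ((x : Ω), (σ x : Ω))

theorem mem_permGraph {σ : Equiv.Perm s} {p : Ω × Ω} :
    p ∈ permGraph σ ↔ ∃ h : p.1 ∈ s, (σ ⟨p.1, h⟩ : Ω) = p.2 := by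
  constructor
  · rintro ⟨x, rfl⟩
    exact ⟨x.2, rfl⟩
  · rintro ⟨h, hp⟩
    exact ⟨⟨p.1, h⟩, Prod.ext rfl hp⟩

theorem disjoint_permGraph {σ τ : Equiv.Perm s} (h : ∀ a, σ a ≠ τ a) :
    Disjoint (permGraph σ) (permGraph τ) := by
  rw [Set.disjoint_left]
  rintro _ ⟨a, rfl⟩ ⟨b, hb⟩
  obtain ⟨hba, hτσ⟩ := Prod.mk.inj hb
  obtain rfl := Subtype.ext hba
  exact h b (Subtype.ext hτσ.symm)

theorem iUnion_permGraph_eq {ι : Type*} {r : Set (Ω × Ω)} (hr : r ⊆ s ×ˢ s)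
    {σ : ι → Equiv.Perm s}
    (hσ : ∀ a b : s, ((a : Ω), (b : Ω)) ∈ r ↔ ∃ k, σ k a = b) :
    ⋃ k, permGraph (σ k) = r := by
  ext ⟨i, j⟩
  simp only [mem_iUnion, mem_permGraph]
  constructor
  · rintro ⟨k, hi, hj⟩
    exact hj ▸ (hσ ⟨i, hi⟩ _).mpr ⟨k, rfl⟩
  · intro hij
    obtain ⟨hi, hj⟩ := hr hij
    obtain ⟨k, hk⟩ := (hσ ⟨i, hi⟩ ⟨j, hj⟩).mp hij
    exact ⟨k, hi, congrArg Subtype.val hk⟩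

theorem ncard_row_subtype {r : Set (Ω × Ω)} (hr : r ⊆ s ×ˢ s) (a : Ω) :
    {b : s | (a, (b : Ω)) ∈ r}.ncard = {b | (a, b) ∈ r}.ncard :=
  ncard_preimage_of_injective_subset_range (s := {b | (a, b) ∈ r}) Subtype.val_injective
    fun b hb => ⟨⟨b, (hr hb).2⟩, rfl⟩

theorem ncard_col_subtype {r : Set (Ω × Ω)} (hr : r ⊆ s ×ˢ s) (b : Ω) :
    {a : s | ((a : Ω), b) ∈ r}.ncard = {a | (a, b) ∈ r}.ncard :=
  ncard_preimage_of_injective_subset_range (s := {a | (a, b) ∈ r}) Subtype.val_injective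
    fun a ha => ⟨⟨a, (hr ha).1⟩, rfl⟩

end PermGraph

theorem mem_RI {J : Set (ZMod n × ZMod n)} {t : ZMod n × ZMod n × ZMod n} :
    t ∈ RI J ↔ (t.2.1 - t.1, t.2.2 - t.1) ∈ J := by
  constructor
  · rintro ⟨x, p, hp, rfl⟩
    simpa using hp
  · intro h
    exact ⟨t.1, _, h, by simp⟩

theorem RI_iUnion {ι : Type*} (J : ι → Set (ZMod n × ZMod n)) :
    RI (⋃ k, J k) = ⋃ k, RI (J k) := by
  ext t
  simp only [mem_RI, mem_iUnion]

theorem disjoint_RI {J J' : Set (ZMod n × ZMod n)} (h : Disjoint J J') :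
    Disjoint (RI J) (RI J') :=
  Set.disjoint_left.mpr fun _ ht ht' => Set.disjoint_left.mp h (mem_RI.mp ht) (mem_RI.mp ht')

theorem isNontrivialCirculant_RI {J : Set (ZMod n × ZMod n)} (hJ : J ⊆ Xset n)
    (hne : J.Nonempty) : IsNontrivialCirculant (RI J) := by
  refine ⟨fun i j k h => ?_, ?_, fun t ht => ?_⟩
  · rw [mem_RI] at h ⊢
    simpa using h
  · obtain ⟨p, hp⟩ := hne
    exact ⟨(0, p.1, p.2), by simpa [mem_RI] using hp⟩
  · obtain ⟨h1, h2, h12⟩ := hJ (mem_RI.mp ht)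
    refine ⟨fun h => h1 ?_, fun h => h2 ?_, fun h => h12 ?_⟩ <;> simp [h]

theorem RI_transI (J : Set (ZMod n × ZMod n)) :
    RI (transI J) = (fun t => (t.1, t.2.2, t.2.1)) ⁻¹' RI J := by
  ext t
  simp [mem_RI, transI]

theorem transI_permGraph {s : Set (ZMod n)} (σ : Equiv.Perm s) :
    transI (permGraph σ) = permGraph σ⁻¹ := by
  rw [transI, permGraph, permGraph, ← range_comp]
  conv_rhs => rw [← σ.surjective.range_comp]
  simp [Function.comp_def]

theorem thinVia_sgm12_RI_permGraph (σ : Equiv.Perm {x : ZMod n | x ≠ 0}) :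
    ThinVia (RI (permGraph σ)) sgm12 := by
  refine ⟨fun t ht u hu htu => ?_, ?_⟩
  · simp only [sgm12, Prod.mk.injEq] at htu
    obtain ⟨h1, h2⟩ := htu
    obtain ⟨_, ht⟩ := mem_permGraph.mp (mem_RI.mp ht)
    obtain ⟨_, hu⟩ := mem_permGraph.mp (mem_RI.mp hu)
    simp only [h1, h2] at ht
    refine Prod.ext h1 (Prod.ext h2 ?_)
    simpa [ht, h1] using hu
  · ext ⟨x, y⟩
    simp only [mem_image, sgm12, Prod.mk.injEq, mem_ofPred_eq]
    constructor
    · rintro ⟨t, ht, rfl, rfl⟩ h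
      obtain ⟨hne, _⟩ := mem_permGraph.mp (mem_RI.mp ht)
      exact hne (by simp [h])
    · intro hxy
      have hyx : y - x ∈ {x : ZMod n | x ≠ 0} := sub_ne_zero.mpr (Ne.symm hxy)
      exact ⟨(x, y, σ ⟨y - x, hyx⟩ + x), mem_RI.mpr (mem_permGraph.mpr ⟨hyx, by simp⟩),
        rfl, rfl⟩

theorem thinVia_sgm13_RI_permGraph (σ : Equiv.Perm {x : ZMod n | x ≠ 0}) :
    ThinVia (RI (permGraph σ)) sgm13 := by
  have hswap : RI (permGraph σ) = (fun t => (t.1, t.2.2, t.2.1)) '' RI (permGraph σ⁻¹) := by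
    rw [← transI_permGraph, RI_transI, image_preimage_eq]
    exact fun t => ⟨(t.1, t.2.2, t.2.1), rfl⟩
  rw [hswap]
  exact (thinVia_sgm12_RI_permGraph σ⁻¹).image

theorem RI_disjoint_union_of_thin_general (n : ℕ) (hn : 3 ≤ n)
    (I : Set (ZMod n × ZMod n)) (hIX : I ⊆ Xset n)
    (nI : ℕ) (hreg : RegPar I nI) :
    ∃ S : Fin nI → Set (ZMod n × ZMod n × ZMod n),
      (∀ k, IsNontrivialCirculant (S k) ∧ ThinVia (S k) sgm12 ∧ ThinVia (S k) sgm13) ∧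
      (Pairwise fun k l => Disjoint (S k) (S l)) ∧
      RI I = ⋃ k, S k := by
  have : NeZero n := ⟨by omega⟩
  have : Fact (1 < n) := ⟨by omega⟩
  set s := {x : ZMod n | x ≠ 0}
  have hIs : I ⊆ s ×ˢ s := fun p hp => ⟨(hIX hp).1, (hIX hp).2.1⟩
  obtain ⟨σ, hdisj, hcover⟩ :=
    exists_perm_decomposition_of_regular (fun a b : s => ((a : ZMod n), (b : ZMod n)) ∈ I) nI
      (fun a => (ncard_row_subtype hIs a).trans (hreg.2.2 a a.2).1)
      (fun b => (ncard_col_subtype hIs b).trans (hreg.2.2 b b.2).2)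
  have hI : ⋃ k, permGraph (σ k) = I := iUnion_permGraph_eq hIs hcover
  refine ⟨fun k => RI (permGraph (σ k)), fun k => ⟨?_, thinVia_sgm12_RI_permGraph _,
    thinVia_sgm13_RI_permGraph _⟩, fun k l hkl => disjoint_RI (disjoint_permGraph (hdisj hkl)),
    by rw [← hI, RI_iUnion]⟩
  exact isNontrivialCirculant_RI ((subset_iUnion _ k).trans (hI ▸ hIX))
    ⟨_, mem_range_self ⟨1, one_ne_zero⟩⟩

/-- If `I ⊆ X` satisfies the regularity condition with parameter
`n_I > 0`, then `R_I` is a disjoint union of `n_I` nontrivial 3-circulants, each of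
which is both `12`-thin and `13`-thin. -/
theorem RI_disjoint_union_of_thin (n : ℕ) (hn : 3 ≤ n)
    (I : Set (ZMod n × ZMod n)) (hIX : I ⊆ Xset n)
    (nI : ℕ) (hnI : 0 < nI) (hreg : RegPar I nI) :
    ∃ S : Fin nI → Set (ZMod n × ZMod n × ZMod n),
      (∀ k, IsNontrivialCirculant (S k) ∧ ThinVia (S k) sgm12 ∧ ThinVia (S k) sgm13) ∧
      (Pairwise fun k l => Disjoint (S k) (S l)) ∧
      RI I = ⋃ k, S k :=
  RI_disjoint_union_of_thin_general n hn I hIX nI hreg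

end CirculantAST
end
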